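/- arXiv:1610.00182 — 8 statements merged into one kernel-verified Lean document; each statement's English description precedes it below -/
import Mathlib

section
/- Let p(x) = x^n + p_{n-1}x^{n-1} + ... + p_1 x + ε be a monic real polynomial with ε = (-1)^n, satisfying the signed-palindromic condition p_{n-k} = ε p_k for 1 ≤ k ≤ n-1. Let R be the companion-type matrix whose first column is (-p_{n-1}, ..., -p_1, -ε)^T and whose remaining columns are the first n-1 standard basis vectors (i.e., R e_k = e_{k-1} for 2 ≤ k ≤ n), and let S be the upper-triangular Toeplitz matrix with 1 on the diagonal and (i,j)-entry ε p_{j-i} for j > i. Then -ε R^n = S S^{-T}, where S^{-T} denotes the inverse transpose of S. -/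
open Matrix

set_option maxHeartbeats 4000000 in
theorem stmt0 (n : ℕ) (hn : 2 ≤ n) (p : ℕ → ℝ)
    (hpal : ∀ k, 1 ≤ k → k ≤ n - 1 → p (n - k) = (-1 : ℝ) ^ n * p k)
    (R S : Matrix (Fin n) (Fin n) ℝ)
    (hR : ∀ i j : Fin n, R i j =
      if (j : ℕ) = 0 then
        (if (i : ℕ) = n - 1 then -(-1 : ℝ) ^ n else -p (n - 1 - (i : ℕ)))
      else (if (i : ℕ) + 1 = (j : ℕ) then 1 else 0))
    (hS : ∀ i j : Fin n, S i j =
      if i = j then 1 else if i < j then (-1 : ℝ) ^ n * p ((j : ℕ) - (i : ℕ)) else 0) :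
    (-(-1 : ℝ) ^ n) • R ^ n = S * (Sᵀ)⁻¹ := by
  have hn0 : 0 < n := by omega
  set ε : ℝ := (-1 : ℝ) ^ n with hε
  clear_value ε
  have hε2 : ε * ε = 1 := by rw [hε, ← mul_pow]; norm_num
  have hpal' : ∀ a b : ℕ, a + b = n → 1 ≤ a → 1 ≤ b → p a = ε * p b := by
    intro a b hab ha hb
    have h1 : a = n - b := by omega
    rw [h1]; exact hpal b hb (by omega)
  have hp : ∀ a b : ℕ, a = b → p a = p b := fun a b h => by rw [h]
  -- transpose entries
  have hST : ∀ i j : Fin n, Sᵀ i j =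
      if (i : ℕ) = (j : ℕ) then 1
      else if (j : ℕ) < (i : ℕ) then ε * p ((i : ℕ) - (j : ℕ)) else 0 := by
    intro i j
    rw [Matrix.transpose_apply, hS]
    simp only [Fin.ext_iff, Fin.lt_def, ← hε]
    split_ifs <;> first | rfl | omega
  -- row structure of R * X
  have hmulR : ∀ (X : Matrix (Fin n) (Fin n) ℝ) (i j : Fin n),
      (R * X) i j =
        (if (i : ℕ) = n - 1 then -ε else -p (n - 1 - (i : ℕ))) * X ⟨0, hn0⟩ j
        + (if h : (i : ℕ) + 1 < n then X ⟨(i : ℕ) + 1, h⟩ j else 0) := by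
    intro X i j
    rw [Matrix.mul_apply]
    by_cases hi : (i : ℕ) + 1 < n
    · rw [dif_pos hi]
      have hsplit : ∀ k : Fin n, R i k * X k j =
          (if k = ⟨0, hn0⟩ then
            (if (i : ℕ) = n - 1 then -ε else -p (n - 1 - (i : ℕ))) * X ⟨0, hn0⟩ j else 0)
          + (if k = ⟨(i : ℕ) + 1, hi⟩ then X ⟨(i : ℕ) + 1, hi⟩ j else 0) := by
        intro k
        rw [hR]
        by_cases h0 : k = (⟨0, hn0⟩ : Fin n)
        · subst h0
          have h1 : ¬((⟨0, hn0⟩ : Fin n) = ⟨(i : ℕ) + 1, hi⟩) := by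
            simp [Fin.ext_iff]
          rw [if_pos rfl, if_pos rfl, if_neg h1, add_zero]
        · by_cases h1 : k = (⟨(i : ℕ) + 1, hi⟩ : Fin n)
          · subst h1
            have h2 : ¬((⟨(i : ℕ) + 1, hi⟩ : Fin n) : ℕ) = 0 := by simp
            rw [if_neg h2, if_pos rfl, if_neg h0, if_pos rfl, zero_add, one_mul]
          · have h2 : ¬((k : ℕ) = 0) := by
              simp [Fin.ext_iff] at h0; omega
            have h3 : ¬((i : ℕ) + 1 = (k : ℕ)) := by
              simp [Fin.ext_iff] at h1; omega
            rw [if_neg h2, if_neg h3, if_neg h0, if_neg h1, zero_mul, add_zero]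
      rw [Finset.sum_congr rfl fun k _ => hsplit k, Finset.sum_add_distrib,
        Finset.sum_ite_eq', Finset.sum_ite_eq']
      simp
    · rw [dif_neg hi, add_zero]
      have hsplit : ∀ k : Fin n, R i k * X k j =
          (if k = ⟨0, hn0⟩ then
            (if (i : ℕ) = n - 1 then -ε else -p (n - 1 - (i : ℕ))) * X ⟨0, hn0⟩ j else 0) := by
        intro k
        rw [hR]
        by_cases h0 : k = (⟨0, hn0⟩ : Fin n)
        · subst h0
          rw [if_pos rfl, if_pos rfl]
        · have h2 : ¬((k : ℕ) = 0) := by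
            simp [Fin.ext_iff] at h0; omega
          have h3 : ¬((i : ℕ) + 1 = (k : ℕ)) := by
            have := k.isLt; omega
          rw [if_neg h2, if_neg h3, if_neg h0, zero_mul]
      rw [Finset.sum_congr rfl fun k _ => hsplit k, Finset.sum_ite_eq']
      simp
  -- key induction
  have key : ∀ m : ℕ, 1 ≤ m → m ≤ n → ∀ i j : Fin n, (R ^ m * Sᵀ) i j =
      (if m ≤ (j : ℕ) ∧ (j : ℕ) - m = (i : ℕ) then 1
        else if m ≤ (j : ℕ) ∧ (j : ℕ) - m < (i : ℕ) then ε * p ((i : ℕ) - ((j : ℕ) - m)) else 0)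
      - (if n - m ≤ (i : ℕ) ∧ (i : ℕ) - (n - m) ≤ (j : ℕ) then
          (if (j : ℕ) - ((i : ℕ) - (n - m)) = 0 then ε else p ((j : ℕ) - ((i : ℕ) - (n - m))))
        else 0) := by
    intro m hm1
    induction m, hm1 using Nat.le_induction with
    | base =>
      intro _ i j
      rw [pow_one, hmulR, hST]
      by_cases hi : (i : ℕ) + 1 < n
      · rw [dif_pos hi, hST]
        simp only [Fin.val_mk]
        rw [if_neg (by omega : ¬ (i : ℕ) = n - 1)]
        split_ifs <;> first | omega | ring1 |
          (rw [hpal' (n - 1 - (i : ℕ)) ((i : ℕ) + 1 - (j : ℕ)) (by omega) (by omega) (by omega)]; ring1) |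
          (rw [hp ((i : ℕ) + 1 - (j : ℕ)) ((i : ℕ) - ((j : ℕ) - 1)) (by omega)]; ring1)
      · rw [dif_neg hi]
        have hin : (i : ℕ) = n - 1 := by have := i.isLt; omega
        rw [if_pos hin]
        simp only [Fin.val_mk]
        split_ifs <;> first | omega | ring1 |
          (rw [hpal' ((i : ℕ) - ((j : ℕ) - 1)) ((j : ℕ) - ((i : ℕ) - (n - 1))) (by omega) (by omega) (by omega)]; ring1) |
          (rw [hpal' ((i : ℕ) - ((j : ℕ) - 1)) ((j : ℕ) - ((i : ℕ) - (n - 1))) (by omega) (by omega) (by omega)];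
            first
            | linear_combination (p ((j : ℕ) - ((i : ℕ) - (n - 1)))) * hε2
            | linear_combination (-(p ((j : ℕ) - ((i : ℕ) - (n - 1))))) * hε2)
    | succ m hm1 ih =>
      intro hmn i j
      have ihh := ih (by omega)
      rw [pow_succ', Matrix.mul_assoc, hmulR, ihh]
      simp only [Fin.val_mk]
      by_cases hi : (i : ℕ) + 1 < n
      · rw [dif_pos hi, ihh]
        simp only [Fin.val_mk]
        rw [if_neg (by omega : ¬ (i : ℕ) = n - 1)]
        split_ifs <;> first | omega | ring1 |
          (rw [hpal' (n - 1 - (i : ℕ)) ((i : ℕ) + 1 - ((j : ℕ) - m)) (by omega) (by omega) (by omega)]; ring1) |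
          (rw [hp ((i : ℕ) + 1 - ((j : ℕ) - m)) ((i : ℕ) - ((j : ℕ) - (m + 1))) (by omega)]; ring1) |
          (rw [hp ((j : ℕ) - ((i : ℕ) + 1 - (n - m))) ((j : ℕ) - ((i : ℕ) - (n - (m + 1)))) (by omega)]; ring1) |
          (rw [hp ((j : ℕ) - ((i : ℕ) + 1 - (n - m))) ((j : ℕ) - ((i : ℕ) - (n - (m + 1)))) (by omega),
            hpal' (n - 1 - (i : ℕ)) ((i : ℕ) + 1 - ((j : ℕ) - m)) (by omega) (by omega) (by omega)]; ring1) |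
          (rw [hp ((i : ℕ) + 1 - ((j : ℕ) - m)) ((i : ℕ) - ((j : ℕ) - (m + 1))) (by omega),
            hp ((j : ℕ) - ((i : ℕ) + 1 - (n - m))) ((j : ℕ) - ((i : ℕ) - (n - (m + 1)))) (by omega)]; ring1)
      · rw [dif_neg hi]
        have hin : (i : ℕ) = n - 1 := by have := i.isLt; omega
        rw [if_pos hin]
        split_ifs <;> first | omega | ring1 |
          (rw [hpal' ((i : ℕ) - ((j : ℕ) - (m + 1))) ((j : ℕ) - ((i : ℕ) - (n - (m + 1)))) (by omega) (by omega) (by omega)]; ring1) |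
          (rw [hpal' ((i : ℕ) - ((j : ℕ) - (m + 1))) ((j : ℕ) - ((i : ℕ) - (n - (m + 1)))) (by omega) (by omega) (by omega)];
            first
            | linear_combination (p ((j : ℕ) - ((i : ℕ) - (n - (m + 1))))) * hε2
            | linear_combination (-(p ((j : ℕ) - ((i : ℕ) - (n - (m + 1)))))) * hε2)
  -- determinant of S
  have hdetS : S.det = 1 := by
    have ht : S.BlockTriangular id := by
      intro i j hij
      rw [hS, if_neg (by exact fun h => absurd h (by exact ne_of_gt hij)),
        if_neg (by exact fun h => absurd h (not_lt_of_gt hij))]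
    rw [Matrix.det_of_upperTriangular ht]
    have hdiag : ∀ i : Fin n, S i i = 1 := by intro i; rw [hS, if_pos rfl]
    simp [hdiag]
  have hdet : IsUnit (Sᵀ).det := by
    rw [Matrix.det_transpose, hdetS]; exact isUnit_one
  have hfin : S = (-ε) • (R ^ n * Sᵀ) := by
    funext i j
    rw [Matrix.smul_apply, key n (by omega) (le_refl n) i j, hS, smul_eq_mul]
    have hjn : ¬ n ≤ (j : ℕ) := by have := j.isLt; omega
    simp only [Fin.ext_iff, Fin.lt_def, Nat.sub_self, Nat.sub_zero]
    rw [if_neg (by omega : ¬(n ≤ (j : ℕ) ∧ (j : ℕ) - n = (i : ℕ))),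
      if_neg (by omega : ¬(n ≤ (j : ℕ) ∧ (j : ℕ) - n < (i : ℕ)))]
    rcases lt_trichotomy ((i : ℕ)) ((j : ℕ)) with h | h | h
    · rw [if_neg (by omega), if_pos h, if_pos (by omega : 0 ≤ (i : ℕ) ∧ (i : ℕ) ≤ (j : ℕ)),
        if_neg (by omega)]
      ring1
    · rw [if_pos h, if_pos (by omega : 0 ≤ (i : ℕ) ∧ (i : ℕ) ≤ (j : ℕ)),
        if_pos (by omega : (j : ℕ) - (i : ℕ) = 0)]
      linear_combination -hε2
    · rw [if_neg (by omega), if_neg (by omega), if_neg (by omega)]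
      ring1
  have h2 : ((-ε) • (R ^ n * Sᵀ)) * (Sᵀ)⁻¹ = (-ε) • R ^ n := by
    rw [Matrix.smul_mul, Matrix.mul_assoc, Matrix.mul_nonsing_inv _ hdet, Matrix.mul_one]
  calc (-ε) • R ^ n = ((-ε) • (R ^ n * Sᵀ)) * (Sᵀ)⁻¹ := h2.symm
    _ = S * (Sᵀ)⁻¹ := by rw [← hfin]
end

section
/- Let p(x) = x^n + Σ_{k=1}^{n-1} p_k x^k + ε be a signed-palindromic real polynomial with ε = (-1)^n, and let S be the unipotent upper-triangular Toeplitz matrix with entries S_{ij} = ε p_{j-i} for i < j. Let Π_ε be the cyclic permutation matrix with Π_ε e_1 = ε e_n and Π_ε e_{k+1} = e_k. Then ε(S + S^T) = p(Π_ε), where p(Π_ε) is the polynomial p evaluated at the matrix Π_ε. -/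
/-!
For `0 < k < n` the power `Π_ε ^ k` has ones on the `k`-th superdiagonal and `ε` on the
`(n - k)`-th subdiagonal, while `Π_ε ^ n = ε • 1`. Hence `p(Π_ε)` is the Toeplitz matrix with
`p_k` on the `k`-th superdiagonal, `2ε` on the diagonal and `ε p_{n-k}` on the `(n - k)`-th
subdiagonal. The palindromic condition rewrites `ε p_{n-k}` as `p_k = ε (ε p_k)`, which is exactly
the corresponding entry of `ε (S + Sᵀ)`.
-/

open Matrix

namespace Matrix

variable {R : Type*} [Semiring R]

/-- The generator of the `c`-circulant matrices; `Π_ε` is `twistedShift n ε`. -/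
def twistedShift (n : ℕ) (c : R) : Matrix (Fin n) (Fin n) R :=
  of fun i j => if (i : ℕ) + 1 = j then 1 else if (i : ℕ) = n - 1 ∧ (j : ℕ) = 0 then c else 0

variable {n : ℕ} (c : R)

theorem mul_twistedShift_apply_of_val_succ (M : Matrix (Fin n) (Fin n) R) (i : Fin n)
    {l j : Fin n} (h : (l : ℕ) + 1 = j) : (M * twistedShift n c) i j = M i l := by
  rw [mul_apply, Finset.sum_eq_single l]
  · simp [twistedShift, h]
  · intro l' _ hl'
    have hl'j : (l' : ℕ) + 1 ≠ j := fun h' => hl' (Fin.ext (by omega))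
    simp only [twistedShift, of_apply, hl'j, if_false, mul_ite, mul_zero, ite_eq_right_iff]
    omega
  · simp

theorem mul_twistedShift_apply_of_val_eq_zero (M : Matrix (Fin n) (Fin n) R) (i : Fin n)
    {l j : Fin n} (hl : (l : ℕ) = n - 1) (hj : (j : ℕ) = 0) :
    (M * twistedShift n c) i j = M i l * c := by
  rw [mul_apply, Finset.sum_eq_single l]
  · simp [twistedShift, hl, hj]
  · intro l' _ hl'
    have hl'n : (l' : ℕ) ≠ n - 1 := fun h => hl' (Fin.ext (by omega))
    simp [twistedShift, hl'n, hj]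
  · simp

theorem twistedShift_pow_apply {k : ℕ} (hk : k ≤ n) (i j : Fin n) :
    (twistedShift n c ^ k) i j =
      if (i : ℕ) + k = j then 1 else if (j : ℕ) + n = i + k then c else 0 := by
  have hj := j.isLt
  induction k generalizing j with
  | zero =>
    simp only [pow_zero, one_apply, Fin.ext_iff, add_zero]
    split_ifs <;> first | rfl | omega
  | succ k ih =>
    have hi := i.isLt
    rw [pow_succ]
    by_cases hj0 : (j : ℕ) = 0
    · obtain ⟨l, hl⟩ : ∃ l : Fin n, (l : ℕ) = n - 1 := ⟨⟨n - 1, by omega⟩, rfl⟩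
      rw [mul_twistedShift_apply_of_val_eq_zero c _ _ hl hj0, ih (by omega) l l.isLt]
      split_ifs <;> first | omega | simp
    · obtain ⟨l, hl⟩ : ∃ l : Fin n, (l : ℕ) + 1 = j :=
        ⟨⟨j - 1, by omega⟩, Nat.sub_add_cancel (by omega)⟩
      rw [mul_twistedShift_apply_of_val_succ c _ _ hl, ih (by omega) l l.isLt]
      split_ifs <;> first | rfl | omega

theorem twistedShift_pow_self : twistedShift n c ^ n = c • 1 := by
  ext i j
  rw [twistedShift_pow_apply c le_rfl, smul_apply, one_apply, smul_eq_mul, mul_ite, mul_one,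
    mul_zero]
  have := j.isLt
  simp only [Fin.ext_iff]
  split_ifs <;> first | rfl | omega

theorem sum_Ioo_smul_twistedShift_pow_apply (p : ℕ → R) (i j : Fin n) :
    (∑ k ∈ Finset.Ioo 0 n, p k • twistedShift n c ^ k) i j =
      if (i : ℕ) < j then p (j - i) else if (j : ℕ) < i then p (n + j - i) * c else 0 := by
  have := i.isLt
  have := j.isLt
  have hterm : ∀ k ∈ Finset.Ioo 0 n, (p k • twistedShift n c ^ k) i j =
      if (i : ℕ) + k = j then p k else if (j : ℕ) + n = i + k then p k * c else 0 := by
    intro k hk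
    rw [smul_apply, twistedShift_pow_apply c (Finset.mem_Ioo.mp hk).2.le, smul_eq_mul]
    split_ifs <;> simp
  rw [sum_apply, Finset.sum_congr rfl hterm]
  have hvanish : ∀ m < n, ∀ k ∈ Finset.Ioo 0 n, k ≠ m → (i : ℕ) + m = j ∨ (j : ℕ) + n = i + m →
      (if (i : ℕ) + k = j then p k else if (j : ℕ) + n = i + k then p k * c else 0) = 0 := by
    intro m hmn k hk hkm hm
    rw [Finset.mem_Ioo] at hk
    rw [if_neg (by omega), if_neg (by omega)]
  rcases lt_trichotomy (i : ℕ) j with hij | hij | hij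
  · rw [Finset.sum_eq_single ((j : ℕ) - i)
      (fun k hk hk' => hvanish _ (by omega) k hk hk' (by omega))
      (fun h => (h (Finset.mem_Ioo.mpr ⟨by omega, by omega⟩)).elim)]
    rw [if_pos (by omega), if_pos hij]
  · rw [Finset.sum_eq_zero fun k hk =>
      hvanish 0 (by omega) k hk (Finset.mem_Ioo.mp hk).1.ne' (by omega)]
    simp [hij]
  · rw [Finset.sum_eq_single (n + (j : ℕ) - i)
      (fun k hk hk' => hvanish _ (by omega) k hk hk' (by omega))
      (fun h => (h (Finset.mem_Ioo.mpr ⟨by omega, by omega⟩)).elim)]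
    rw [if_neg (by omega), if_pos (by omega), if_neg (by omega), if_pos hij]

end Matrix

theorem stmt1_general (n : ℕ) (p : ℕ → ℝ)
    (hpal : ∀ k, 1 ≤ k → k ≤ n - 1 → p (n - k) = (-1 : ℝ) ^ n * p k)
    (S Pe : Matrix (Fin n) (Fin n) ℝ)
    (hS : ∀ i j : Fin n, S i j =
      if i = j then 1 else if i < j then (-1 : ℝ) ^ n * p ((j : ℕ) - (i : ℕ)) else 0)
    (hPe : ∀ i j : Fin n, Pe i j =
      if (i : ℕ) + 1 = (j : ℕ) then 1
      else if (i : ℕ) = n - 1 ∧ (j : ℕ) = 0 then (-1 : ℝ) ^ n else 0) :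
    ((-1 : ℝ) ^ n) • (S + Sᵀ) =
      Pe ^ n + ∑ k ∈ Finset.Ioo 0 n, p k • Pe ^ k + ((-1 : ℝ) ^ n) • 1 := by
  obtain rfl : Pe = twistedShift n ((-1) ^ n) := ext hPe
  have hεε : (-1 : ℝ) ^ n * (-1) ^ n = 1 := by rw [← mul_pow]; norm_num
  rw [twistedShift_pow_self]
  ext i j
  simp only [Matrix.add_apply, Matrix.smul_apply, transpose_apply, one_apply, hS,
    sum_Ioo_smul_twistedShift_pow_apply, smul_eq_mul, Fin.ext_iff, Fin.lt_def]
  rcases lt_trichotomy (i : ℕ) j with hij | hij | hij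
  · simp only [hij, hij.ne, hij.ne', hij.not_gt, if_true, if_false]
    linear_combination p (j - i) * hεε
  · simp only [hij, lt_irrefl, if_true, if_false]
    ring
  · have hwrap : p (n + j - i) = (-1) ^ n * p (i - j) := by
      rw [← hpal _ (by omega) (by omega)]
      congr 1
      omega
    simp only [hij, hij.ne, hij.ne', hij.not_gt, if_true, if_false, hwrap]
    ring

theorem stmt1 (n : ℕ) (hn : 2 ≤ n) (p : ℕ → ℝ)
    (hpal : ∀ k, 1 ≤ k → k ≤ n - 1 → p (n - k) = (-1 : ℝ) ^ n * p k)
    (S Pe : Matrix (Fin n) (Fin n) ℝ)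
    (hS : ∀ i j : Fin n, S i j =
      if i = j then 1 else if i < j then (-1 : ℝ) ^ n * p ((j : ℕ) - (i : ℕ)) else 0)
    (hPe : ∀ i j : Fin n, Pe i j =
      if (i : ℕ) + 1 = (j : ℕ) then 1
      else if (i : ℕ) = n - 1 ∧ (j : ℕ) = 0 then (-1 : ℝ) ^ n else 0) :
    ((-1 : ℝ) ^ n) • (S + Sᵀ) =
      Pe ^ n + ∑ k ∈ Finset.Ioo 0 n, p k • Pe ^ k + ((-1 : ℝ) ^ n) • 1 :=
  stmt1_general n p hpal S Pe hS hPe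
end

section
/- With notation as above, the number of zero eigenvalues of S + S^T equals the number of common eigenvalues (counted with multiplicity) of R and Π_ε; in particular S + S^T is nondegenerate if and only if p(π_k) ≠ 0 for all k, i.e., no root of x^n - ε is a root of the characteristic polynomial p of R. -/
/-!
Write `ε = (-1) ^ n`. Palindromicity of `p` makes `S + Sᵀ` the `ε`-circulant matrix
`2 + ε ∑ pₖ Π_εᵏ = ε p(Π_ε)`. For every root `z` of `xⁿ = ε` the vector `(zʲ)ⱼ` is an eigenvector
of every `ε`-circulant matrix, here with eigenvalue `ε p(z)`. The `n` roots `π_k` are distinct, so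
their Vandermonde matrix diagonalizes `S + Sᵀ`, and the multiplicity of the eigenvalue `0` is the
number of `k` with `p(π_k) = 0`.
-/

open Matrix Complex Polynomial Finset

section TwistedCirculant

variable {R : Type*} [CommRing R] {n : ℕ}

/-- The `ε`-circulant matrix with first row `c`, i.e. `∑ₘ cₘ Π_εᵐ`: indices are read mod `n`
and entries below the diagonal carry a factor `ε`. -/
def twistedCirculant (ε : R) (c : Fin n → R) : Matrix (Fin n) (Fin n) R :=
  of fun i j => if i ≤ j then c (j - i) else ε * c (j - i)

theorem twistedCirculant_apply_add [NeZero n] (ε : R) (c : Fin n → R) {z : R} (hz : z ^ n = ε)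
    (i m : Fin n) :
    twistedCirculant ε c i (i + m) * z ^ ((i + m : Fin n) : ℕ) = c m * z ^ ((i : ℕ) + m) := by
  simp only [twistedCirculant, of_apply, add_sub_cancel_left, Fin.le_def, Fin.val_add_eq_ite]
  split_ifs with hwrap hle hle
  · omega
  · rw [← hz, mul_assoc, mul_left_comm, ← pow_add, Nat.add_sub_cancel' hwrap]
  · rfl
  · omega

theorem twistedCirculant_mulVec_powers [NeZero n] (ε : R) (c : Fin n → R) {z : R} (hz : z ^ n = ε) :
    twistedCirculant ε c *ᵥ (fun j : Fin n => z ^ (j : ℕ)) =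
      (∑ m, c m * z ^ (m : ℕ)) • fun j : Fin n => z ^ (j : ℕ) := by
  ext i
  simp only [mulVec, dotProduct, Pi.smul_apply, smul_eq_mul, sum_mul]
  rw [← Equiv.sum_comp (Equiv.addLeft i)]
  refine sum_congr rfl fun m _ => ?_
  rw [Equiv.coe_addLeft, twistedCirculant_apply_add ε c hz, pow_add]
  ring

theorem twistedCirculant_map {S : Type*} [CommRing S] (f : R →+* S) (ε : R) (c : Fin n → R) :
    (twistedCirculant ε c).map f = twistedCirculant (f ε) (f ∘ c) := by
  ext i j
  simp only [twistedCirculant, map_apply, of_apply, Function.comp_apply]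
  split_ifs <;> simp

end TwistedCirculant

section Diagonalization

variable {R : Type*} [CommRing R] {ι : Type*} [Fintype ι] [DecidableEq ι]

theorem charpoly_eq_prod_of_mulVec_eq_smul {A W : Matrix ι ι R} (hW : IsUnit W.det) {d : ι → R}
    (h : ∀ k, A *ᵥ W k = d k • W k) : A.charpoly = ∏ k, (X - C (d k)) := by
  have hAW : A * Wᵀ = Wᵀ * diagonal d := by
    ext i k
    have := congrFun (h k) i
    simp only [mulVec, dotProduct, Pi.smul_apply, smul_eq_mul] at this
    rw [mul_apply, mul_diagonal]
    simpa [mul_comm] using this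
  have hWt : IsUnit Wᵀ.det := by rwa [det_transpose]
  have hA : A = Wᵀ * diagonal d * Wᵀ⁻¹ := by rw [← hAW, mul_nonsing_inv_cancel_right _ _ hWt]
  rw [← charpoly_diagonal, hA, mul_assoc, charpoly_mul_comm, nonsing_inv_mul_cancel_right _ _ hWt]

theorem det_ne_zero_iff_rootMultiplicity_charpoly_eq_zero [Nontrivial R] (A : Matrix ι ι R) :
    A.det ≠ 0 ↔ rootMultiplicity 0 A.charpoly = 0 := by
  rw [rootMultiplicity_eq_zero_iff, IsRoot.def, ← coeff_zero_eq_eval_zero,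
    det_eq_sign_charpoly_coeff]
  simp [A.charpoly_monic.ne_zero]

end Diagonalization

theorem rootMultiplicity_prod_X_sub_C {R : Type*} [CommRing R] [IsDomain R] [DecidableEq R]
    {ι : Type*} [Fintype ι] (d : ι → R) (a : R) :
    rootMultiplicity a (∏ i, (X - C (d i))) = #{i | d i = a} := by
  have hroots : (∏ i, (X - C (d i))).roots = univ.val.map d := by
    simpa [Multiset.map_map, Function.comp_def] using roots_multiset_prod_X_sub_C (univ.val.map d)
  rw [← count_roots, hroots, Multiset.count_map, card_def, filter_val]
  simp_rw [eq_comm]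

def symmetrizedRow {R : Type*} [CommRing R] (n : ℕ) (p : ℕ → R) : Fin n → R :=
  fun m => if (m : ℕ) = 0 then 2 else (-1) ^ n * p m

theorem comp_symmetrizedRow {R S : Type*} [CommRing R] [CommRing S] (f : R →+* S) (n : ℕ)
    (p : ℕ → R) : f ∘ symmetrizedRow n p = symmetrizedRow n (f ∘ p) := by
  ext m
  simp only [symmetrizedRow, Function.comp_apply, apply_ite f, map_ofNat, map_mul, map_pow, map_neg,
    map_one]

theorem add_transpose_eq_twistedCirculant {R : Type*} [CommRing R] {n : ℕ} (p : ℕ → R)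
    (hpal : ∀ k, 1 ≤ k → k ≤ n - 1 → p (n - k) = (-1 : R) ^ n * p k)
    {S : Matrix (Fin n) (Fin n) R}
    (hS : ∀ i j : Fin n, S i j =
      if i = j then 1 else if i < j then (-1 : R) ^ n * p ((j : ℕ) - (i : ℕ)) else 0) :
    S + Sᵀ = twistedCirculant ((-1) ^ n) (symmetrizedRow n p) := by
  have hsq : ((-1 : R) ^ n) * (-1) ^ n = 1 := by rw [← mul_pow]; norm_num
  ext i j
  rw [Matrix.add_apply, transpose_apply, hS i j, hS j i]
  simp only [twistedCirculant, symmetrizedRow, of_apply]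
  rcases lt_trichotomy i j with hij | rfl | hji
  · have hij' : (i : ℕ) < j := hij
    rw [if_neg hij.ne, if_pos hij, if_neg hij.ne', if_neg (not_lt.2 hij.le), if_pos hij.le,
      Fin.coe_sub_iff_le.2 hij.le, if_neg (by omega), add_zero]
  · rw [if_pos rfl, if_pos le_rfl, Fin.coe_sub_iff_le.2 le_rfl, Nat.sub_self, if_pos rfl]
    norm_num
  · have hji' : (j : ℕ) < i := hji
    have hsub : ((j - i : Fin n) : ℕ) = n - (i - j) := by
      rw [Fin.coe_sub_iff_lt.2 hji]; omega
    rw [if_neg hji.ne', if_neg (not_lt.2 hji.le), if_neg hji.ne, if_pos hji, if_neg (not_le.2 hji),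
      hsub, if_neg (by omega), hpal _ (by omega) (by omega), ← mul_assoc, hsq, zero_add, one_mul]

theorem sum_symmetrizedRow_mul_pow {R : Type*} [CommRing R] {n : ℕ} (hn : n ≠ 0) (p : ℕ → R)
    {z : R} (hz : z ^ n = (-1) ^ n) :
    ∑ m, symmetrizedRow n p m * z ^ (m : ℕ) =
      (-1) ^ n * (z ^ n + ∑ j ∈ Ioo 0 n, p j * z ^ j + (-1) ^ n) := by
  have hsq : ((-1 : R) ^ n) * (-1) ^ n = 1 := by rw [← mul_pow]; norm_num
  have hIoo : ∑ j ∈ Ioo 0 n, (if j = 0 then 2 else (-1) ^ n * p j) * z ^ j =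
      (-1) ^ n * ∑ j ∈ Ioo 0 n, p j * z ^ j := by
    rw [mul_sum]
    refine sum_congr rfl fun j hj => ?_
    rw [if_neg (mem_Ioo.1 hj).1.ne', mul_assoc]
  simp only [symmetrizedRow]
  rw [Fin.sum_univ_eq_sum_range (fun m => (if m = 0 then 2 else (-1) ^ n * p m) * z ^ m),
    range_eq_Ico, ← Ioo_insert_left (Nat.pos_of_ne_zero hn), sum_insert left_notMem_Ioo, hIoo,
    if_pos rfl, hz]
  linear_combination -2 * hsq

/-- The eigenvalues `π_k` of `Π_ε`. -/
noncomputable def cyclicEigenvalue (n k : ℕ) : ℂ :=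
  exp (2 * Real.pi * I * ((k : ℂ) + if Even n then 0 else (1 / 2 : ℂ)) / n)

theorem cyclicEigenvalue_eq (n k : ℕ) :
    cyclicEigenvalue n k = cyclicEigenvalue n 0 * exp (2 * Real.pi * I / n) ^ k := by
  rw [cyclicEigenvalue, cyclicEigenvalue, ← exp_nat_mul, ← exp_add]
  congr 1
  ring

theorem cyclicEigenvalue_pow {n : ℕ} (hn : n ≠ 0) (k : ℕ) :
    cyclicEigenvalue n k ^ n = (-1) ^ n := by
  rw [cyclicEigenvalue_eq, mul_pow, ← pow_mul, mul_comm k, pow_mul,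
    (isPrimitiveRoot_exp n hn).pow_eq_one, one_pow, mul_one, cyclicEigenvalue, ← exp_nat_mul]
  rcases Nat.even_or_odd n with he | ho
  · simp [he, he.neg_one_pow]
  · have : (n : ℂ) * (2 * Real.pi * I * (((0 : ℕ) : ℂ) + 1 / 2) / n) = Real.pi * I := by
      rw [Nat.cast_zero, zero_add]
      field_simp
    rw [if_neg (Nat.not_even_iff_odd.2 ho), this, exp_pi_mul_I, ho.neg_one_pow]

theorem cyclicEigenvalue_injective {n : ℕ} (hn : n ≠ 0) :
    Function.Injective fun k : Fin n => cyclicEigenvalue n k := by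
  intro k l h
  simp only [cyclicEigenvalue_eq n k, cyclicEigenvalue_eq n l] at h
  exact Fin.ext <| (isPrimitiveRoot_exp n hn).pow_inj k.isLt l.isLt <|
    mul_left_cancel₀ (exp_ne_zero _) h

open scoped Classical in
theorem stmt3 (n : ℕ) (hn : 2 ≤ n) (p : ℕ → ℝ)
    (hpal : ∀ k, 1 ≤ k → k ≤ n - 1 → p (n - k) = (-1 : ℝ) ^ n * p k)
    (S : Matrix (Fin n) (Fin n) ℝ)
    (hS : ∀ i j : Fin n, S i j =
      if i = j then 1 else if i < j then (-1 : ℝ) ^ n * p ((j : ℕ) - (i : ℕ)) else 0)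
    (π : Fin n → ℂ)
    (hπ : ∀ k : Fin n, π k =
      Complex.exp (2 * Real.pi * Complex.I * (((k : ℕ) : ℂ) + if Even n then 0 else (1/2 : ℂ)) / n))
    (pval : Fin n → ℂ)
    (hpval : ∀ k, pval k =
      (π k) ^ n + ∑ j ∈ Finset.Ioo 0 n, (p j : ℂ) * (π k) ^ j + (-1 : ℂ) ^ n) :
    Polynomial.rootMultiplicity 0 (Matrix.charpoly (S + Sᵀ)) =
      (Finset.univ.filter fun k : Fin n => pval k = 0).card ∧
    ((S + Sᵀ).det ≠ 0 ↔ ∀ k : Fin n, pval k ≠ 0) := by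
  have hn0 : n ≠ 0 := by omega
  have : NeZero n := ⟨hn0⟩
  have hroot : ∀ k, π k ^ n = (-1) ^ n := fun k => hπ k ▸ cyclicEigenvalue_pow hn0 k
  have hinj : Function.Injective π := funext hπ ▸ cyclicEigenvalue_injective hn0
  have hA : (S + Sᵀ).map (algebraMap ℝ ℂ) =
      twistedCirculant ((-1) ^ n) (symmetrizedRow n fun j => (p j : ℂ)) := by
    rw [add_transpose_eq_twistedCirculant p hpal hS, twistedCirculant_map, comp_symmetrizedRow,
      map_pow, map_neg, map_one]
    rfl
  have heig : ∀ k, (S + Sᵀ).map (algebraMap ℝ ℂ) *ᵥ vandermonde π k =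
      ((-1) ^ n * pval k) • vandermonde π k := fun k => by
    rw [hA, hpval, ← sum_symmetrizedRow_mul_pow hn0 _ (hroot k)]
    exact twistedCirculant_mulVec_powers _ _ (hroot k)
  have hcp := charpoly_eq_prod_of_mulVec_eq_smul
    (det_vandermonde_ne_zero_iff.2 hinj).isUnit heig
  have hmult : rootMultiplicity 0 (S + Sᵀ).charpoly = #{k | pval k = 0} := by
    rw [eq_rootMultiplicity_map (algebraMap ℝ ℂ).injective, ← charpoly_map, hcp, map_zero,
      rootMultiplicity_prod_X_sub_C]
    simp
  refine ⟨hmult, ?_⟩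
  rw [det_ne_zero_iff_rootMultiplicity_charpoly_eq_zero, hmult, card_eq_zero, filter_eq_empty_iff]
  simp
end

section
/- With the setup of the tt*-Toda idealized Stokes matrix: if S + S^T is positive definite then all eigenvalues of R are unimodular, where -ε R^n = S S^{-T}. -/
/-!
Complexify and let `μ` be an eigenvalue of `S S⁻ᵀ`, with eigenvector `v`. For `w = S⁻ᵀ v` we get
`S w = μ Sᵀ w`, so `a = w* S w` satisfies `a = μ ā`. Positive definiteness of `S + Sᵀ` gives
`Re a > 0`, hence `a ≠ 0` and `|μ| = 1`. If `z` is an eigenvalue of `R`, then `-ε zⁿ` is an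
eigenvalue of `-ε Rⁿ = S S⁻ᵀ`, so `|z|ⁿ = 1`.
-/

namespace Matrix

variable {ι : Type*} [Fintype ι]

theorem star_dotProduct_conjTranspose_mulVec {R : Type*} [NonUnitalSemiring R] [StarRing R]
    (M : Matrix ι ι R) (w : ι → R) :
    star w ⬝ᵥ (Mᴴ *ᵥ w) = star (star w ⬝ᵥ (M *ᵥ w)) := by
  rw [star_dotProduct, star_mulVec, conjTranspose_conjTranspose, dotProduct_mulVec]

theorem re_star_dotProduct_map_ofReal_mulVec (A : Matrix ι ι ℝ) (w : ι → ℂ) :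
    (star w ⬝ᵥ (A.map Complex.ofReal *ᵥ w)).re =
      (fun i ↦ (w i).re) ⬝ᵥ (A *ᵥ fun i ↦ (w i).re) +
        (fun i ↦ (w i).im) ⬝ᵥ (A *ᵥ fun i ↦ (w i).im) := by
  simp only [dotProduct, mulVec, Finset.mul_sum, Complex.re_sum, ← Finset.sum_add_distrib]
  refine Finset.sum_congr rfl fun i _ ↦ Finset.sum_congr rfl fun j _ ↦ ?_
  simp only [Pi.star_apply, map_apply, Complex.star_def, Complex.mul_re, Complex.mul_im,
    Complex.conj_re, Complex.conj_im, Complex.ofReal_re, Complex.ofReal_im]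
  ring

theorem PosDef.re_star_dotProduct_map_ofReal_mulVec_pos {A : Matrix ι ι ℝ} (hA : A.PosDef)
    {w : ι → ℂ} (hw : w ≠ 0) : 0 < (star w ⬝ᵥ (A.map Complex.ofReal *ᵥ w)).re := by
  rw [re_star_dotProduct_map_ofReal_mulVec]
  by_cases hre : (fun i ↦ (w i).re) = 0
  · have him : (fun i ↦ (w i).im) ≠ 0 := fun him ↦
      hw <| funext fun i ↦ Complex.ext (congrFun hre i) (congrFun him i)
    have := hA.dotProduct_mulVec_pos him
    simp only [star_trivial] at this
    simp [hre, this]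
  · have h₁ := hA.dotProduct_mulVec_pos hre
    have h₂ := hA.posSemidef.dotProduct_mulVec_nonneg (fun i ↦ (w i).im)
    simp only [star_trivial] at h₁ h₂
    linarith

theorem re_star_dotProduct_map_ofReal_mulVec_pos_of_posDef_add_transpose {S : Matrix ι ι ℝ}
    (hS : (S + Sᵀ).PosDef) {w : ι → ℂ} (hw : w ≠ 0) : 0 < (star w ⬝ᵥ (S.map Complex.ofReal *ᵥ w)).re := by
  have h := hS.re_star_dotProduct_map_ofReal_mulVec_pos hw
  have hsum : (S + Sᵀ).map Complex.ofReal = S.map Complex.ofReal + (S.map Complex.ofReal)ᴴ := by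
    ext; simp
  rw [hsum, add_mulVec, dotProduct_add, star_dotProduct_conjTranspose_mulVec, Complex.add_re,
    Complex.star_def, Complex.conj_re] at h
  linarith

theorem map_nonsing_inv [DecidableEq ι] {K L : Type*} [Field K] [Field L] (f : K →+* L)
    (M : Matrix ι ι K) : M⁻¹.map f = (M.map f)⁻¹ := by
  ext i j
  simp only [inv_def, Ring.inverse_eq_inv', map_apply, smul_apply, smul_eq_mul, map_mul, map_inv₀]
  have hadj := congrFun₂ (RingHom.map_adjugate f M) i j
  simp only [RingHom.mapMatrix_apply, map_apply] at hadj
  rw [hadj, RingHom.map_det]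
  rfl

theorem exists_mulVec_eq_smul_of_mem_spectrum [DecidableEq ι] {K : Type*} [Field K]
    {A : Matrix ι ι K} {μ : K} (hμ : μ ∈ spectrum K A) : ∃ v ≠ 0, A *ᵥ v = μ • v := by
  rw [← spectrum_toLin', ← Module.End.hasEigenvalue_iff_mem_spectrum] at hμ
  obtain ⟨v, hv⟩ := hμ.exists_hasEigenvector
  exact ⟨v, hv.2, by simpa using hv.apply_eq_smul⟩

theorem map_ofReal_mul_transpose_inv [DecidableEq ι] (S : Matrix ι ι ℝ) :
    (S * Sᵀ⁻¹).map Complex.ofReal = S.map Complex.ofReal * (S.map Complex.ofReal)ᴴ⁻¹ := by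
  refine (Matrix.map_mul (f := Complex.ofRealHom)).trans
    (congrArg _ ((map_nonsing_inv Complex.ofRealHom Sᵀ).trans ?_))
  congr 1
  ext
  simp

theorem norm_eq_one_of_mem_spectrum_mul_conjTranspose_inv [DecidableEq ι] {M : Matrix ι ι ℂ}
    (hM : ∀ w ≠ 0, 0 < (star w ⬝ᵥ (M *ᵥ w)).re) {μ : ℂ} (hμ : μ ∈ spectrum ℂ (M * Mᴴ⁻¹)) :
    ‖μ‖ = 1 := by
  have hinj : Function.Injective M.mulVec := fun u v huv ↦ by
    by_contra h
    have := hM (u - v) (sub_ne_zero.mpr h)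
    rw [mulVec_sub, huv, sub_self, dotProduct_zero] at this
    exact lt_irrefl _ this
  have hdet : IsUnit Mᴴ.det := by
    rw [← isUnit_iff_isUnit_det, isUnit_conjTranspose]
    exact mulVec_injective_iff_isUnit.mp hinj
  obtain ⟨v, hv0, hv⟩ := exists_mulVec_eq_smul_of_mem_spectrum hμ
  set w := Mᴴ⁻¹ *ᵥ v
  have hMw : Mᴴ *ᵥ w = v := by rw [mulVec_mulVec, mul_nonsing_inv _ hdet, one_mulVec]
  have hw0 : w ≠ 0 := fun h ↦ hv0 <| by rw [← hMw, h, mulVec_zero]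
  have hMw_smul : M *ᵥ w = μ • (Mᴴ *ᵥ w) := by rw [hMw, ← hv, ← mulVec_mulVec]
  set a := star w ⬝ᵥ (M *ᵥ w)
  have ha : a = μ * star a := by
    rw [← star_dotProduct_conjTranspose_mulVec, ← smul_eq_mul, ← dotProduct_smul, ← hMw_smul]
  have hre : 0 < a.re := hM w hw0
  have ha0 : ‖a‖ ≠ 0 := norm_ne_zero_iff.mpr fun h ↦ by simp [h] at hre
  have hnorm := congrArg norm ha
  rw [norm_mul, norm_star] at hnorm
  exact (mul_eq_right₀ ha0).mp hnorm.symm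

end Matrix

open Matrix

theorem stmt5_general (n : ℕ) (hn : 2 ≤ n)
    (R S : Matrix (Fin n) (Fin n) ℝ)
    (hrel : (-(-1 : ℝ) ^ n) • R ^ n = S * (Sᵀ)⁻¹)
    (hpd : (S + Sᵀ).PosDef) :
    ∀ z ∈ spectrum ℂ (R.map (Complex.ofReal)), ‖z‖ = 1 := by
  intro z hz
  set ε : ℂˣ := -(-1) ^ n
  have hrelC : ε • (R.map Complex.ofReal) ^ n =
      S.map Complex.ofReal * (S.map Complex.ofReal)ᴴ⁻¹ := by
    have hpow : (R.map Complex.ofReal) ^ n = (R ^ n).map Complex.ofReal :=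
      (map_pow Complex.ofRealHom.mapMatrix R n).symm
    rw [← map_ofReal_mul_transpose_inv, ← hrel, hpow]
    ext
    simp [ε, Units.smul_def]
  have hmem : (ε : ℂ) * z ^ n ∈ spectrum ℂ (S.map Complex.ofReal * (S.map Complex.ofReal)ᴴ⁻¹) := by
    rw [← hrelC]; exact spectrum.smul_mem_smul_iff.mpr (spectrum.pow_mem_pow _ n hz)
  have hnorm := norm_eq_one_of_mem_spectrum_mul_conjTranspose_inv
    (fun _ hw ↦ re_star_dotProduct_map_ofReal_mulVec_pos_of_posDef_add_transpose hpd hw) hmem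
  simp only [ε, Units.val_neg, Units.val_pow_eq_pow_val, Units.val_one, norm_mul, norm_neg,
    norm_pow, norm_one, one_pow, one_mul] at hnorm
  exact (pow_eq_one_iff_of_nonneg (norm_nonneg z) (by omega)).mp hnorm

theorem stmt5 (n : ℕ) (hn : 2 ≤ n) (p : ℕ → ℝ)
    (hpal : ∀ k, 1 ≤ k → k ≤ n - 1 → p (n - k) = (-1 : ℝ) ^ n * p k)
    (R S : Matrix (Fin n) (Fin n) ℝ)
    (hR : ∀ i j : Fin n, R i j =
      if (j : ℕ) = 0 then
        (if (i : ℕ) = n - 1 then -(-1 : ℝ) ^ n else -p (n - 1 - (i : ℕ)))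
      else (if (i : ℕ) + 1 = (j : ℕ) then 1 else 0))
    (hS : ∀ i j : Fin n, S i j =
      if i = j then 1 else if i < j then (-1 : ℝ) ^ n * p ((j : ℕ) - (i : ℕ)) else 0)
    (hrel : (-(-1 : ℝ) ^ n) • R ^ n = S * (Sᵀ)⁻¹)
    (hpd : (S + Sᵀ).PosDef) :
    ∀ z ∈ spectrum ℂ (R.map (Complex.ofReal)), ‖z‖ = 1 :=
  stmt5_general n hn R S hrel hpd
end

section
/- For m = ⌊n/2⌋ and the roots π_k of x^n - ε, the set P = ∩_{k=0}^{m} {(p_1,...,p_m) ∈ ℝ^m : ε p(π_k) > 0} (where the remaining coefficients of p are determined by the signed-palindromic condition p_{n-k} = ε p_k) is a bounded convex open subset of ℝ^m. -/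
/-!
Since the coefficients of `p` depend linearly on `q`, each condition `0 < Re (ε p(π_k))` cuts out
an open half-space, so `P` is convex and open.

For boundedness write `π_k = θ ω^k` with `ω` a primitive `n`-th root of unity and `θ^n = ε`.
Signed palindromy makes every `p(π_k)` real, and complex conjugation permutes the `π_k`, sending
those with `k > m` to ones with `k ≤ m`; hence `ε p(π_k) > 0` for all `k < n`. Orthogonality of
the powers of `ω` gives `∑_k ε p(π_k) = 2n` and `∑_k p(π_k) π_k^(n-j) = n ε p_j` for `0 < j < n`,
so `n |p_j| ≤ ∑_k |p(π_k)| = 2n`, i.e. `|p_j| ≤ 2`.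
-/

open Complex Finset ComplexConjugate

theorem Nat.not_dvd_of_pos_of_lt_two_mul {n t : ℕ} (h0 : 0 < t) (h2 : t < 2 * n) (hne : t ≠ n) :
    ¬ n ∣ t := by
  rintro ⟨s, rfl⟩
  rcases s with _ | _ | s
  · simp at h0
  · simp at hne
  · nlinarith

theorem Finset.sum_Ioo_reflect {M : Type*} [AddCommMonoid M] (f : ℕ → M) (n : ℕ) :
    ∑ j ∈ Ioo 0 n, f (n - j) = ∑ j ∈ Ioo 0 n, f j :=
  sum_nbij' (n - ·) (n - ·) (by simp only [mem_Ioo]; omega) (by simp only [mem_Ioo]; omega)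
    (by simp only [mem_Ioo]; omega) (by simp only [mem_Ioo]; omega) (fun _ _ => rfl)

theorem IsPrimitiveRoot.sum_mul_pow_pow_eq_zero {K : Type*} [Field K] {ω : K} {n : ℕ}
    (hω : IsPrimitiveRoot ω n) (θ : K) {t : ℕ} (ht : ¬ n ∣ t) :
    ∑ k : Fin n, (θ * ω ^ (k : ℕ)) ^ t = 0 := by
  have hne : ω ^ t ≠ 1 := by rwa [Ne, hω.pow_eq_one_iff_dvd]
  have hpow : (ω ^ t) ^ n = 1 := by rw [← pow_mul, mul_comm, pow_mul, hω.pow_eq_one, one_pow]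
  simp_rw [mul_pow, ← pow_mul, mul_comm _ t, pow_mul]
  rw [← mul_sum, Fin.sum_univ_eq_sum_range (fun k => (ω ^ t) ^ k), geom_sum_eq hne, hpow,
    sub_self, zero_div, mul_zero]

theorem IsPrimitiveRoot.mul_pow_pow_self {K : Type*} [CommMonoid K] {ω θ : K} {n : ℕ}
    (hω : IsPrimitiveRoot ω n) (k : ℕ) : (θ * ω ^ k) ^ n = θ ^ n := by
  rw [mul_pow, ← pow_mul, mul_comm k n, pow_mul, hω.pow_eq_one, one_pow, mul_one]

/-- The paper's `p(z)`, with middle coefficients `p_j = a j`. -/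
noncomputable def signedEval (n : ℕ) (a : ℕ → ℝ) (z : ℂ) : ℂ :=
  z ^ n + ∑ j ∈ Ioo 0 n, (a j : ℂ) * z ^ j + (-1 : ℂ) ^ n

section signedEval

variable {n : ℕ} {a : ℕ → ℝ} {z : ℂ}

theorem signedEval_conj : signedEval n a (conj z) = conj (signedEval n a z) := by
  simp [signedEval, map_sum]

theorem re_neg_one_pow_mul_signedEval_conj :
    ((-1 : ℂ) ^ n * signedEval n a (conj z)).re = ((-1 : ℂ) ^ n * signedEval n a z).re := by
  rw [signedEval_conj, ← conj_re, map_mul, map_pow, map_neg, map_one, conj_conj]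

theorem im_signedEval_eq_zero (ha : ∀ j ∈ Ioo 0 n, a (n - j) = (-1) ^ n * a j)
    (hz : ‖z‖ = 1) (hzn : z ^ n = (-1) ^ n) : (signedEval n a z).im = 0 := by
  have hconj : conj z = z⁻¹ := (inv_eq_conj hz).symm
  have hterm : ∀ j ∈ Ioo 0 n, (a j : ℂ) * conj z ^ j = (a (n - j) : ℂ) * z ^ (n - j) := by
    intro j hj
    have hjn : j ≤ n := (mem_Ioo.mp hj).2.le
    have hinv : (z ^ j)⁻¹ = (-1) ^ n * z ^ (n - j) := by
      refine (eq_inv_of_mul_eq_one_left ?_).symm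
      rw [mul_assoc, ← pow_add, Nat.sub_add_cancel hjn, hzn, ← mul_pow]
      norm_num
    rw [ha j hj, hconj, inv_pow, hinv]
    push_cast
    ring
  rw [← conj_eq_iff_im, ← signedEval_conj, signedEval, signedEval, sum_congr rfl hterm,
    sum_Ioo_reflect (fun j => (a j : ℂ) * z ^ j), ← map_pow, hzn]
  simp

theorem sum_signedEval {ω θ : ℂ} (hω : IsPrimitiveRoot ω n) (hθ : θ ^ n = (-1) ^ n) :
    ∑ k : Fin n, signedEval n a (θ * ω ^ (k : ℕ)) = 2 * n * (-1) ^ n := by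
  have hmid : ∀ j ∈ Ioo 0 n, ∑ k : Fin n, (a j : ℂ) * (θ * ω ^ (k : ℕ)) ^ j = 0 := fun j hj => by
    rw [← mul_sum, hω.sum_mul_pow_pow_eq_zero θ
      (Nat.not_dvd_of_pos_of_lt (mem_Ioo.mp hj).1 (mem_Ioo.mp hj).2), mul_zero]
  simp only [signedEval, sum_add_distrib, hω.mul_pow_pow_self, hθ]
  rw [sum_comm, sum_eq_zero hmid]
  simp only [sum_const, card_univ, Fintype.card_fin, nsmul_eq_mul, add_zero]
  ring

theorem sum_signedEval_mul_pow {ω θ : ℂ} (hω : IsPrimitiveRoot ω n) (hθ : θ ^ n = (-1) ^ n)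
    {j : ℕ} (hj : j ∈ Ioo 0 n) :
    ∑ k : Fin n, signedEval n a (θ * ω ^ (k : ℕ)) * (θ * ω ^ (k : ℕ)) ^ (n - j) =
      n * (-1) ^ n * a j := by
  obtain ⟨hj0, hjn⟩ := mem_Ioo.mp hj
  have hsum (t : ℕ) (h0 : 0 < t) (h2 : t < 2 * n) (hne : t ≠ n) :
      ∑ k : Fin n, (θ * ω ^ (k : ℕ)) ^ t = 0 :=
    hω.sum_mul_pow_pow_eq_zero θ (Nat.not_dvd_of_pos_of_lt_two_mul h0 h2 hne)
  have hmid : ∀ i ∈ Ioo 0 n, i ≠ j →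
      ∑ k : Fin n, (a i : ℂ) * (θ * ω ^ (k : ℕ)) ^ (i + (n - j)) = 0 := fun i hi hij => by
    rw [← mul_sum, hsum _ (by omega) (by have := (mem_Ioo.mp hi).2; omega) (by omega), mul_zero]
  simp only [signedEval, add_mul, sum_mul, mul_assoc, ← pow_add, sum_add_distrib]
  rw [sum_comm, sum_eq_single_of_mem j hj hmid, ← mul_sum, ← mul_sum,
    hsum (n + (n - j)) (by omega) (by omega) (by omega), hsum (n - j) (by omega) (by omega) (by omega),
    Nat.add_sub_cancel' hjn.le]
  simp only [hω.mul_pow_pow_self, hθ, sum_const, card_univ, Fintype.card_fin, nsmul_eq_mul,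
    zero_add, mul_zero, add_zero]
  ring

theorem abs_le_two_of_forall_re_pos {ω θ : ℂ} (hω : IsPrimitiveRoot ω n)
    (hθ : θ ^ n = (-1) ^ n) (ha : ∀ j ∈ Ioo 0 n, a (n - j) = (-1) ^ n * a j)
    (hpos : ∀ k : Fin n, 0 < ((-1 : ℂ) ^ n * signedEval n a (θ * ω ^ (k : ℕ))).re)
    {j : ℕ} (hj : j ∈ Ioo 0 n) : |a j| ≤ 2 := by
  have hn : 0 < n := (mem_Ioo.mp hj).1.trans (mem_Ioo.mp hj).2
  have hpow (k : Fin n) : (θ * ω ^ (k : ℕ)) ^ n = (-1) ^ n := by rw [hω.mul_pow_pow_self, hθ]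
  have hnorm (k : Fin n) : ‖θ * ω ^ (k : ℕ)‖ = 1 := by
    rw [← pow_eq_one_iff_of_nonneg (norm_nonneg _) hn.ne', ← norm_pow, hpow]
    simp
  have hnorm_eval (k : Fin n) :
      ‖signedEval n a (θ * ω ^ (k : ℕ))‖ = ((-1 : ℂ) ^ n * signedEval n a (θ * ω ^ (k : ℕ))).re := by
    have him : ((-1 : ℂ) ^ n * signedEval n a (θ * ω ^ (k : ℕ))).im = 0 := by
      rw [show (-1 : ℂ) ^ n = ((-1 : ℝ) ^ n : ℝ) by push_cast; rfl, im_ofReal_mul,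
        im_signedEval_eq_zero ha (hnorm k) (hpow k), mul_zero]
    rw [← abs_of_pos (hpos k), abs_re_eq_norm.mpr him, norm_mul]
    simp
  have hbound : (n : ℝ) * |a j| ≤ 2 * n :=
    calc (n : ℝ) * |a j|
        = ‖∑ k : Fin n, signedEval n a (θ * ω ^ (k : ℕ)) * (θ * ω ^ (k : ℕ)) ^ (n - j)‖ := by
          rw [sum_signedEval_mul_pow hω hθ hj]
          simp
      _ ≤ ∑ k : Fin n, ‖signedEval n a (θ * ω ^ (k : ℕ)) * (θ * ω ^ (k : ℕ)) ^ (n - j)‖ :=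
          norm_sum_le _ _
      _ = ((-1 : ℂ) ^ n * ∑ k : Fin n, signedEval n a (θ * ω ^ (k : ℕ))).re := by
          simp only [norm_mul, norm_pow, hnorm, one_pow, mul_one, hnorm_eval, mul_sum, re_sum]
      _ = 2 * n := by
          rw [sum_signedEval hω hθ, mul_left_comm, ← mul_pow]
          simp
  exact le_of_mul_le_mul_left (hbound.trans_eq (mul_comm _ _)) (Nat.cast_pos.mpr hn)

end signedEval

/-- The paper's `π_k`; these are the roots of `x^n = (-1)^n` for `k < n`. -/
noncomputable def signedRoot (n k : ℕ) : ℂ :=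
  exp (2 * Real.pi * I * ((k : ℂ) + if Even n then 0 else (1 / 2 : ℂ)) / n)

section signedRoot

variable {n : ℕ}

theorem signedRoot_eq_mul_pow (k : ℕ) :
    signedRoot n k = signedRoot n 0 * exp (2 * Real.pi * I / n) ^ k := by
  rw [signedRoot, signedRoot, ← exp_nat_mul, ← exp_add]
  congr 1
  push_cast
  ring

theorem signedRoot_zero_pow (hn : n ≠ 0) : signedRoot n 0 ^ n = (-1) ^ n := by
  rw [signedRoot, ← exp_nat_mul]
  split_ifs with h
  · simp [h.neg_one_pow]
  · have : (n : ℂ) * (2 * Real.pi * I * ((0 : ℕ) + 1 / 2) / n) = Real.pi * I := by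
      field_simp
      push_cast
      ring
    rw [this, exp_pi_mul_I, (Nat.not_even_iff_odd.mp h).neg_one_pow]

theorem conj_signedRoot {k k' : ℕ} (h : k + k' + (if Even n then 0 else 1) = n) :
    conj (signedRoot n k) = signedRoot n k' := by
  obtain rfl | hn := eq_or_ne n 0
  · simp only [Even.zero, ↓reduceIte, add_zero, Nat.add_eq_zero_iff] at h
    simp [signedRoot, h]
  rw [signedRoot, signedRoot, ← exp_conj, exp_eq_exp_iff_exists_int]
  refine ⟨-1, ?_⟩
  have hn' : (n : ℂ) ≠ 0 := Nat.cast_ne_zero.mpr hn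
  split_ifs at h ⊢ <;>
  · simp only [map_div₀, map_mul, map_add, map_natCast, conj_ofReal, conj_I, map_ofNat, map_zero,
      map_one, map_div₀]
    field_simp
    rw [← h]
    push_cast
    ring

theorem exists_signedRoot_eq_or_conj {k : ℕ} (hk : k < n) :
    ∃ k' ≤ n / 2, signedRoot n k' = signedRoot n k ∨ signedRoot n k' = conj (signedRoot n k) := by
  by_cases hkn : k ≤ n / 2
  · exact ⟨k, hkn, .inl rfl⟩
  refine ⟨n - k - (if Even n then 0 else 1), ?_, .inr (conj_signedRoot ?_).symm⟩ <;>
  · split_ifs <;> omega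

theorem re_signedEval_signedRoot_pos {a : ℕ → ℝ}
    (h : ∀ k < n, k ≤ n / 2 → 0 < ((-1 : ℂ) ^ n * signedEval n a (signedRoot n k)).re)
    {k : ℕ} (hk : k < n) : 0 < ((-1 : ℂ) ^ n * signedEval n a (signedRoot n k)).re := by
  obtain ⟨k', hk', hk'' | hk''⟩ := exists_signedRoot_eq_or_conj hk
  · rw [← hk'']
    exact h k' (by omega) hk'
  · rw [← re_neg_one_pow_mul_signedEval_conj, ← hk'']
    exact h k' (by omega) hk'

end signedRoot

structure IsSignedPalindromicCoeffs (n m : ℕ) (c : (Fin m → ℝ) → ℕ → ℝ) : Prop where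
  half : m = n / 2
  eq_apply : ∀ (q : Fin m → ℝ) (k : ℕ) (h1 : 1 ≤ k) (h2 : k ≤ m),
    c q k = q ⟨k - 1, Nat.sub_one_lt_of_le h1 h2⟩
  eq_neg_one_pow_mul : ∀ (q : Fin m → ℝ) (k : ℕ), m < k → k ≤ n - 1 →
    c q k = (-1 : ℝ) ^ n * c q (n - k)

namespace IsSignedPalindromicCoeffs

variable {n m : ℕ} {c : (Fin m → ℝ) → ℕ → ℝ}

theorem eq_apply_succ (hc : IsSignedPalindromicCoeffs n m c) (q : Fin m → ℝ) (i : Fin m) :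
    c q (i + 1) = q i :=
  hc.eq_apply q (i + 1) (by omega) i.2

theorem apply_sub_eq_neg_one_pow_mul (hc : IsSignedPalindromicCoeffs n m c) (q : Fin m → ℝ) :
    ∀ j ∈ Ioo 0 n, c q (n - j) = (-1) ^ n * c q j := by
  intro j hj
  obtain ⟨hj0, hjn⟩ := mem_Ioo.mp hj
  have hsq : ((-1 : ℝ) ^ n) ^ 2 = 1 := by rw [← pow_mul, mul_comm, pow_mul]; norm_num
  by_cases hnj : m < n - j
  · rw [hc.eq_neg_one_pow_mul q (n - j) hnj (by omega), Nat.sub_sub_self hjn.le]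
  by_cases hj : m < j
  · rw [hc.eq_neg_one_pow_mul q j hj (by omega), ← mul_assoc, ← sq, hsq, one_mul]
  -- otherwise `n = 2 * m` and `j = m`
  have h := hc.half
  have hj' : n - j = j := by omega
  have hev : Even n := ⟨m, by omega⟩
  rw [hj', hev.neg_one_pow, one_mul]

theorem exists_eq_mul_apply (hc : IsSignedPalindromicCoeffs n m c) {j : ℕ} (hj : j ∈ Ioo 0 n) :
    ∃ (i : Fin m) (s : ℝ), ∀ q, c q j = s * q i := by
  obtain ⟨hj0, hjn⟩ := mem_Ioo.mp hj
  have h := hc.half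
  by_cases hjm : j ≤ m
  · exact ⟨_, 1, fun q => by rw [hc.eq_apply q j hj0 hjm, one_mul]⟩
  · refine ⟨⟨n - j - 1, by omega⟩, (-1) ^ n, fun q => ?_⟩
    rw [hc.eq_neg_one_pow_mul q j (by omega) (by omega), hc.eq_apply q (n - j) (by omega) (by omega)]

theorem isLinearMap_re_mul_sum (hc : IsSignedPalindromicCoeffs n m c) (w z : ℂ) :
    IsLinearMap ℝ fun q => (w * ∑ j ∈ Ioo 0 n, (c q j : ℂ) * z ^ j).re := by
  simp only [mul_sum, re_sum, mul_left_comm w, re_ofReal_mul]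
  constructor
  · intro x y
    rw [← sum_add_distrib]
    refine sum_congr rfl fun j hj => ?_
    obtain ⟨i, s, h⟩ := hc.exists_eq_mul_apply hj
    simp only [h, Pi.add_apply]
    ring
  · intro r x
    rw [smul_eq_mul, mul_sum]
    refine sum_congr rfl fun j hj => ?_
    obtain ⟨i, s, h⟩ := hc.exists_eq_mul_apply hj
    simp only [h, Pi.smul_apply, smul_eq_mul]
    ring

theorem convex_isOpen_setOf_re_pos (hc : IsSignedPalindromicCoeffs n m c) (z : ℂ) :
    Convex ℝ {q | 0 < ((-1 : ℂ) ^ n * signedEval n (c q) z).re} ∧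
      IsOpen {q | 0 < ((-1 : ℂ) ^ n * signedEval n (c q) z).re} := by
  have hL := hc.isLinearMap_re_mul_sum ((-1) ^ n) z
  have hset : {q | 0 < ((-1 : ℂ) ^ n * signedEval n (c q) z).re} =
      {q | -((-1) ^ n * (z ^ n + (-1) ^ n)).re <
        ((-1) ^ n * ∑ j ∈ Ioo 0 n, (c q j : ℂ) * z ^ j).re} := by
    ext q
    rw [Set.mem_ofPred_eq, Set.mem_ofPred_eq, neg_lt_iff_pos_add', ← add_re, ← mul_add,
      signedEval, add_right_comm]
  rw [hset]
  exact ⟨convex_halfSpace_gt hL _,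
    isOpen_lt continuous_const (LinearMap.continuous_of_finiteDimensional hL.mk')⟩

theorem abs_apply_le_two (hc : IsSignedPalindromicCoeffs n m c) {q : Fin m → ℝ}
    (hq : ∀ k < n, k ≤ m → 0 < ((-1 : ℂ) ^ n * signedEval n (c q) (signedRoot n k)).re)
    (i : Fin m) : |q i| ≤ 2 := by
  have h := hc.half
  have hn : n ≠ 0 := by have := i.2; omega
  have hpos (k : Fin n) : 0 < ((-1 : ℂ) ^ n *
      signedEval n (c q) (signedRoot n 0 * exp (2 * Real.pi * I / n) ^ (k : ℕ))).re := by
    rw [← signedRoot_eq_mul_pow]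
    exact re_signedEval_signedRoot_pos (h ▸ hq) k.2
  rw [← hc.eq_apply_succ q i]
  exact abs_le_two_of_forall_re_pos (isPrimitiveRoot_exp n hn) (signedRoot_zero_pow hn)
    (hc.apply_sub_eq_neg_one_pow_mul q) hpos (mem_Ioo.mpr ⟨by omega, by omega⟩)

end IsSignedPalindromicCoeffs

theorem stmt6 (n : ℕ) (m : ℕ) (hm : m = n / 2)
    (c : (Fin m → ℝ) → ℕ → ℝ)
    (hc1 : ∀ (q : Fin m → ℝ) (k : ℕ) (h1 : 1 ≤ k) (h2 : k ≤ m),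
      c q k = q ⟨k - 1, by omega⟩)
    (hc2 : ∀ (q : Fin m → ℝ) (k : ℕ), m < k → k ≤ n - 1 →
      c q k = (-1 : ℝ) ^ n * c q (n - k))
    (π : Fin n → ℂ)
    (hπ : ∀ k : Fin n, π k =
      Complex.exp (2 * Real.pi * Complex.I * (((k : ℕ) : ℂ) + if Even n then 0 else (1/2 : ℂ)) / n))
    (P : Set (Fin m → ℝ))
    (hP : P = {q : Fin m → ℝ | ∀ k : Fin n, (k : ℕ) ≤ m →
      0 < (((-1 : ℂ) ^ n) *
        ((π k) ^ n + ∑ j ∈ Finset.Ioo 0 n, (c q j : ℂ) * (π k) ^ j + (-1 : ℂ) ^ n)).re}) :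
    Convex ℝ P ∧ IsOpen P ∧ Bornology.IsBounded P := by
  have hc : IsSignedPalindromicCoeffs n m c := ⟨hm, hc1, hc2⟩
  have hπ' (k : Fin n) : π k = signedRoot n k := hπ k
  have hP' : P = ⋂ k : Fin n, ⋂ (_ : (k : ℕ) ≤ m),
      {q | 0 < ((-1 : ℂ) ^ n * signedEval n (c q) (π k)).re} := by
    rw [hP]
    ext q
    simp only [Set.mem_ofPred_eq, Set.mem_iInter]
    rfl
  refine ⟨?_, ?_, ?_⟩
  · rw [hP']
    exact convex_iInter fun k => convex_iInter fun _ => (hc.convex_isOpen_setOf_re_pos (π k)).1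
  · rw [hP']
    exact isOpen_iInter_of_finite fun k =>
      isOpen_iInter_of_finite fun _ => (hc.convex_isOpen_setOf_re_pos (π k)).2
  · refine (Metric.isBounded_closedBall (x := 0) (r := 2)).subset fun q hq => ?_
    rw [mem_closedBall_zero_iff, pi_norm_le_iff_of_nonneg zero_le_two]
    rw [hP'] at hq
    simp only [Set.mem_iInter, Set.mem_ofPred_eq] at hq
    exact fun i => (Real.norm_eq_abs _).trans_le
      (hc.abs_apply_le_two (fun k hk hkm => hπ' ⟨k, hk⟩ ▸ hq ⟨k, hk⟩ hkm) i)
end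

section
/- (Refined Descartes rule for real-rooted polynomials) If p(x) ∈ ℝ[x] is a nonzero polynomial all of whose complex roots are real, then the number of sign changes ν in the sequence of its nonzero coefficients (in decreasing order of degree) equals exactly the number of positive real roots of p, counted with multiplicity. -/
/-
Descartes' rule gives `#(positive roots of p) ≤ V(p)` and, applied to `p(-X)`,
`#(negative roots) ≤ V(p(-X))`, where `V` counts sign changes. Conversely
`V(p) + V(p(-X)) ≤ deg p - ord₀ p`: if two consecutive nonzero coefficients sit in
degrees `k < n`, they contribute at most two sign changes in total when `n - k ≥ 2`,
and exactly one when `n = k + 1`, since substituting `-X` flips exactly one of the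
two signs. A polynomial that splits over ℝ has `deg p - ord₀ p` nonzero roots, all
real, so both Descartes bounds must be equalities.
-/

open Polynomial

/-- Number of sign changes in a list of real numbers. -/
noncomputable def signChangesList : List ℝ → ℕ
  | a :: b :: t => (if a * b < 0 then 1 else 0) + signChangesList (b :: t)
  | _ => 0

/-- Number of sign changes in the sequence of nonzero coefficients of a real
polynomial, listed in decreasing order of degree. -/
noncomputable def signChanges (p : Polynomial ℝ) : ℕ :=
  signChangesList ((((List.range (p.natDegree + 1)).reverse).map p.coeff).filter
    (fun x => x ≠ 0))

lemma mul_neg_iff_sign_ne {R : Type*} [Ring R] [LinearOrder R] [IsStrictOrderedRing R]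
    {a b : R} (ha : a ≠ 0) (hb : b ≠ 0) : a * b < 0 ↔ SignType.sign a ≠ SignType.sign b := by
  rcases ha.lt_or_gt with ha | ha <;> rcases hb.lt_or_gt with hb | hb <;>
    simp [mul_neg_iff, sign_pos, sign_neg, ha, hb, ha.not_gt, hb.not_gt]

lemma signChangesList_cons_add_one {a : ℝ} (ha : a ≠ 0) {l : List ℝ} (hl : ∀ x ∈ l, x ≠ 0) :
    signChangesList (a :: l) + 1 =
      ((l.map SignType.sign).destutter' (· ≠ ·) (SignType.sign a)).length := by
  induction l generalizing a with
  | nil => rfl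
  | cons b t ih =>
    have hb : b ≠ 0 := hl b List.mem_cons_self
    have ih := ih hb fun x hx => hl x (List.mem_cons_of_mem b hx)
    rw [signChangesList, List.map_cons, List.destutter'_cons]
    by_cases hab : a * b < 0
    · simp [hab, (mul_neg_iff_sign_ne ha hb).mp hab, ← ih, add_comm]
    · have hs : SignType.sign a = SignType.sign b := by
        simpa [mul_neg_iff_sign_ne ha hb] using hab
      simp [hab, hs, ← ih]

lemma signChangesList_eq_length_destutter {l : List ℝ} (hl : ∀ x ∈ l, x ≠ 0) :
    signChangesList l = ((l.map SignType.sign).destutter (· ≠ ·)).length - 1 := by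
  cases l with
  | nil => rfl
  | cons a t =>
    rw [List.map_cons, List.destutter_cons', ← signChangesList_cons_add_one
      (hl a List.mem_cons_self) fun x hx => hl x (List.mem_cons_of_mem a hx)]
    rfl

lemma List.filter_ne_zero_map_sign {R : Type*} [Zero R] [LinearOrder R] (l : List R) :
    (l.map SignType.sign).filter (· ≠ 0) = (l.filter (· ≠ 0)).map SignType.sign := by
  rw [List.filter_map]
  congr 1
  exact List.filter_congr fun x _ => by simp

theorem signChanges_eq_signVariations (p : ℝ[X]) : signChanges p = p.signVariations := by
  rcases eq_or_ne p 0 with rfl | hp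
  · simp [signChanges, signChangesList]
  rw [signChanges, signVariations, coeffList, withBotSucc_degree_eq_natDegree_add_one hp,
    signChangesList_eq_length_destutter fun x hx => by simpa using (List.mem_filter.mp hx).2,
    List.filter_ne_zero_map_sign]

namespace Polynomial

section Ring
variable {R : Type*} [Ring R]

lemma coeff_comp_neg_X (p : R[X]) (n : ℕ) : (p.comp (-X)).coeff n = (-1) ^ n * p.coeff n := by
  induction p using Polynomial.induction_on' with
  | add p q hp hq => simp [add_comp, hp, hq, mul_add]
  | monomial k a =>
    rw [← C_mul_X_pow_eq_monomial, C_mul_comp, X_pow_comp, neg_pow, ← C_1, ← C_neg, ← C_pow,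
      ← mul_assoc, ← C_mul, coeff_C_mul_X_pow, coeff_C_mul_X_pow]
    split_ifs with h
    · subst h
      exact ((Commute.neg_one_left a).pow_left n).eq.symm
    · simp

lemma natDegree_comp_neg_X (p : R[X]) : (p.comp (-X)).natDegree = p.natDegree :=
  natDegree_eq_of_degree_eq degree_comp_neg_X

lemma eraseLead_comp_neg_X (p : R[X]) : (p.comp (-X)).eraseLead = p.eraseLead.comp (-X) := by
  ext n
  simp only [eraseLead_coeff, coeff_comp_neg_X, natDegree_comp_neg_X]
  split_ifs <;> simp

end Ring

lemma natTrailingDegree_le_natTrailingDegree_eraseLead {R : Type*} [Semiring R] {p : R[X]}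
    (h : p.eraseLead ≠ 0) : p.natTrailingDegree ≤ p.eraseLead.natTrailingDegree :=
  natTrailingDegree_le_of_mem_supp _ <| (eraseLead_support p ▸ Finset.mem_of_mem_erase)
    (natTrailingDegree_mem_support_of_nonzero h)

lemma signVariations_eq_zero_of_eraseLead_eq_zero {R : Type*} [Semiring R] [LinearOrder R]
    {p : R[X]} (h : p.eraseLead = 0) : p.signVariations = 0 := by
  rw [← eraseLead_add_monomial_natDegree_leadingCoeff p, h, zero_add, signVariations_monomial]

section StrictOrderedRing
variable {R : Type*} [Ring R] [LinearOrder R] [IsStrictOrderedRing R]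

lemma ite_sign_add_ite_sign_neg_one_pow_le {k n : ℕ} (hkn : k < n) {a b : R} (hb : b ≠ 0) :
    (if SignType.sign a = -SignType.sign b then 1 else 0) +
      (if SignType.sign ((-1) ^ n * a) = -SignType.sign ((-1) ^ k * b) then 1 else 0) ≤ n - k := by
  obtain rfl | hkn := (Nat.succ_le_of_lt hkn).eq_or_lt
  · have key : ∀ s t ε : SignType, t ≠ 0 → ε ≠ 0 →
        (if s = -t then 1 else 0) + (if ε * -1 * s = -(ε * t) then 1 else 0) ≤ 1 := by decide
    rw [sign_mul, sign_mul, sign_pow, sign_pow, pow_succ, sign_neg (neg_one_lt_zero (R := R))]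
    exact (key _ _ _ (sign_ne_zero.mpr hb) (pow_ne_zero _ (by decide))).trans (by omega)
  · split_ifs <;> omega

theorem signVariations_add_signVariations_comp_neg_X_add_natTrailingDegree_le (p : R[X]) :
    p.signVariations + (p.comp (-X)).signVariations + p.natTrailingDegree ≤ p.natDegree := by
  by_cases hq : p.eraseLead = 0
  · rw [signVariations_eq_zero_of_eraseLead_eq_zero hq,
      signVariations_eq_zero_of_eraseLead_eq_zero (by rw [eraseLead_comp_neg_X, hq, zero_comp])]
    simpa using natTrailingDegree_le_natDegree (p := p)
  have hp : p ≠ 0 := fun h => hq (by rw [h, eraseLead_zero])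
  have hk := (eraseLead_natDegree_lt_or_eraseLead_eq_zero p).resolve_right hq
  have ih := signVariations_add_signVariations_comp_neg_X_add_natTrailingDegree_le p.eraseLead
  have hstep := ite_sign_add_ite_sign_neg_one_pow_le hk (a := p.leadingCoeff)
    (leadingCoeff_ne_zero.mpr hq)
  have htrail := natTrailingDegree_le_natTrailingDegree_eraseLead hq
  rw [signVariations_eq_eraseLead_add_ite hp,
    signVariations_eq_eraseLead_add_ite (comp_neg_X_eq_zero_iff.not.mpr hp),
    eraseLead_comp_neg_X, comp_neg_X_leadingCoeff_eq, comp_neg_X_leadingCoeff_eq]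
  omega
termination_by p.support.card
decreasing_by exact eraseLead_support_card_lt hp

end StrictOrderedRing

end Polynomial

lemma Multiset.countP_pos_add_countP_neg_add_count_zero {α : Type*} [Zero α] [LinearOrder α]
    (s : Multiset α) : s.countP (0 < ·) + s.countP (· < 0) + s.count 0 = Multiset.card s := by
  induction s using Multiset.induction_on with
  | empty => simp
  | cons a s ih =>
    rw [Multiset.countP_cons, Multiset.countP_cons, Multiset.count_cons, Multiset.card_cons, ← ih]
    rcases lt_trichotomy a 0 with h | rfl | h
    · simp only [h, h.not_gt, h.ne', ↓reduceIte]
      omega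
    · simp only [lt_irrefl, ↓reduceIte]
      omega
    · simp only [h, h.not_gt, h.ne, ↓reduceIte]
      omega

theorem stmt8_general (p : Polynomial ℝ)
    (hsplit : (p.map (RingHom.id ℝ)).Splits) :
    signChanges p = Multiset.card (p.roots.filter (fun x => 0 < x)) := by
  rw [Polynomial.map_id] at hsplit
  have hpos := roots_countP_pos_le_signVariations p
  have hneg : (p.roots.filter (· < 0)).card ≤ (p.comp (-X)).signVariations := by
    simpa [roots_comp_neg_X, Multiset.countP_map] using
      roots_countP_pos_le_signVariations (p.comp (-X))
  have hcard := p.roots.countP_pos_add_countP_neg_add_count_zero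
  rw [count_roots, rootMultiplicity_eq_natTrailingDegree',
    ← hsplit.natDegree_eq_card_roots] at hcard
  simp only [Multiset.countP_eq_card_filter] at hpos hcard
  have hdeg := signVariations_add_signVariations_comp_neg_X_add_natTrailingDegree_le p
  rw [signChanges_eq_signVariations]
  omega

theorem stmt8 (p : Polynomial ℝ) (hp : p ≠ 0)
    (hsplit : (p.map (RingHom.id ℝ)).Splits) :
    signChanges p = Multiset.card (p.roots.filter (fun x => 0 < x)) :=
  stmt8_general p hsplit
end

section
/- With R, S, Π_ε as in the tt*-Toda setup, let D = I_n - Π_ε R^T. Then D has rank 1, and for all x ∈ ℂ^n, D x = (e_n^* (S + S^T) x) e_n, where e_n is the last standard basis vector. Moreover (Π_ε R^T)² = I_n. -/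
/-!
Away from its last row, `Π_ε Rᵀ` is the identity; its last row is `ε` times the first column
of `R`, i.e. `-ε p_{n-j}` off the diagonal and `ε · (-ε) = -1` on it. With `r` the last row
of `S + Sᵀ` (entries `ε p_{n-j}`, and `2` on the diagonal) this says `Π_ε Rᵀ = I - e_n rᵀ`.
Hence `D = e_n rᵀ` has rank one and `D x = (rᵀ x) e_n`, and
`(I - e_n rᵀ)² = I - (2 - rᵀ e_n) e_n rᵀ = I` because `rᵀ e_n = 2`.
-/

open Matrix

section RankOne

variable {K m n : Type*}

theorem Matrix.one_sub_vecMulVec_sq [CommRing K] [Fintype n] [DecidableEq n] (u v : n → K)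
    (h : v ⬝ᵥ u = 2) : (1 - vecMulVec u v) ^ 2 = 1 := by
  rw [sq, sub_mul, mul_sub, mul_sub, vecMulVec_mul_vecMulVec, h, two_smul, vecMulVec_add]
  simp only [mul_one, one_mul]
  abel

theorem Matrix.rank_vecMulVec_eq_one [Field K] [Fintype m] [Fintype n] {u : m → K} {v : n → K}
    (hu : u ≠ 0) (hv : v ≠ 0) : (vecMulVec u v).rank = 1 := by
  classical
  refine le_antisymm (rank_vecMulVec_le u v) (Nat.one_le_iff_ne_zero.2 fun h0 => ?_)
  rw [rank, Submodule.finrank_eq_zero, LinearMap.range_eq_bot, ← toLin'_apply',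
    LinearEquiv.map_eq_zero_iff] at h0
  obtain ⟨i, hi⟩ := Function.ne_iff.1 hu
  obtain ⟨j, hj⟩ := Function.ne_iff.1 hv
  exact mul_ne_zero hi hj congr($h0 i j)

end RankOne

namespace TtToda

variable {𝕜 : Type*} [CommRing 𝕜] {n : ℕ}

def companion (n : ℕ) (p : ℕ → 𝕜) : Matrix (Fin n) (Fin n) 𝕜 :=
  of fun i j =>
    if (j : ℕ) = 0 then (if (i : ℕ) = n - 1 then -(-1 : 𝕜) ^ n else -p (n - 1 - (i : ℕ)))
    else (if (i : ℕ) + 1 = (j : ℕ) then 1 else 0)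

def toeplitz (n : ℕ) (p : ℕ → 𝕜) : Matrix (Fin n) (Fin n) 𝕜 :=
  of fun i j => if i = j then 1 else if i < j then (-1 : 𝕜) ^ n * p ((j : ℕ) - (i : ℕ)) else 0

variable (𝕜) in
def cyclicShift (n : ℕ) : Matrix (Fin n) (Fin n) 𝕜 :=
  of fun i j =>
    if (i : ℕ) + 1 = (j : ℕ) then 1 else if (i : ℕ) = n - 1 ∧ (j : ℕ) = 0 then (-1 : 𝕜) ^ n else 0

theorem cyclicShift_mul_apply (A : Matrix (Fin n) (Fin n) 𝕜) (i j : Fin n) :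
    (cyclicShift 𝕜 n * A) i j =
      if h : (i : ℕ) + 1 < n then A ⟨i + 1, h⟩ j else (-1) ^ n * A ⟨0, i.pos⟩ j := by
  rw [mul_apply]
  split_ifs with h
  · have hi : (i : ℕ) ≠ n - 1 := by omega
    refine (Fintype.sum_eq_single ⟨i + 1, h⟩ fun k hk => ?_).trans (by simp [cyclicShift])
    have hk : (i : ℕ) + 1 ≠ k := fun e => hk (Fin.ext e.symm)
    simp [cyclicShift, hi, hk]
  · have hi : (i : ℕ) = n - 1 := by omega
    have hk : ∀ k : Fin n, (i : ℕ) + 1 ≠ k := fun k => by omega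
    refine (Fintype.sum_eq_single ⟨0, i.pos⟩ fun k hk0 => ?_).trans (by simp [cyclicShift, hi])
    have hk0 : (k : ℕ) ≠ 0 := fun e => hk0 (Fin.ext e)
    simp [cyclicShift, hk, hk0]

theorem toeplitz_add_transpose_apply_last (p : ℕ → 𝕜) (l j : Fin n) (hl : (l : ℕ) = n - 1) :
    (toeplitz n p + (toeplitz n p)ᵀ) l j = if j = l then 2 else (-1) ^ n * p (n - 1 - j) := by
  have hj := j.isLt
  simp only [Matrix.add_apply, transpose_apply, toeplitz, of_apply, Fin.lt_def, ← Fin.val_inj, hl]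
  split_ifs <;> first | omega | norm_num

theorem cyclicShift_mul_companion_transpose (p : ℕ → 𝕜) (l : Fin n) (hl : (l : ℕ) = n - 1) :
    cyclicShift 𝕜 n * (companion n p)ᵀ =
      1 - vecMulVec (Pi.single l 1) ((toeplitz n p + (toeplitz n p)ᵀ) l) := by
  ext i j
  rw [cyclicShift_mul_apply, Matrix.sub_apply, vecMulVec_apply,
    toeplitz_add_transpose_apply_last p l j hl, one_apply, Pi.single_apply]
  by_cases hi : (i : ℕ) + 1 < n
  · have hil : i ≠ l := fun e => by omega
    rw [dif_pos hi]
    simp [hil, companion, ← Fin.val_inj, eq_comm]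
  · obtain rfl : l = i := Fin.ext (by omega)
    rw [dif_neg hi]
    by_cases hjl : j = l
    · norm_num [hjl, companion, hl, ← mul_pow]
    · have hj : (j : ℕ) ≠ n - 1 := by rwa [← hl, Ne, Fin.val_inj]
      simp [hjl, Ne.symm hjl, hj, companion]

end TtToda

open TtToda

theorem stmt14 (n : ℕ) (hn : 2 ≤ n) (p : ℕ → ℝ)
    (R S Pe : Matrix (Fin n) (Fin n) ℝ)
    (hR : ∀ i j : Fin n, R i j =
      if (j : ℕ) = 0 then
        (if (i : ℕ) = n - 1 then -(-1 : ℝ) ^ n else -p (n - 1 - (i : ℕ)))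
      else (if (i : ℕ) + 1 = (j : ℕ) then 1 else 0))
    (hS : ∀ i j : Fin n, S i j =
      if i = j then 1 else if i < j then (-1 : ℝ) ^ n * p ((j : ℕ) - (i : ℕ)) else 0)
    (hPe : ∀ i j : Fin n, Pe i j =
      if (i : ℕ) + 1 = (j : ℕ) then 1
      else if (i : ℕ) = n - 1 ∧ (j : ℕ) = 0 then (-1 : ℝ) ^ n else 0)
    (D : Matrix (Fin n) (Fin n) ℝ) (hD : D = 1 - Pe * Rᵀ) :
    D.rank = 1 ∧
    (∀ x : Fin n → ℝ, D.mulVec x =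
      ((S + Sᵀ).mulVec x ⟨n - 1, by omega⟩) • (Pi.single (⟨n - 1, by omega⟩ : Fin n) (1 : ℝ) : Fin n → ℝ)) ∧
    (Pe * Rᵀ) ^ 2 = 1 := by
  obtain rfl : R = companion n p := Matrix.ext hR
  obtain rfl : S = toeplitz n p := Matrix.ext hS
  obtain rfl : Pe = cyclicShift ℝ n := Matrix.ext hPe
  set l : Fin n := ⟨n - 1, by omega⟩
  have hM := cyclicShift_mul_companion_transpose p l rfl
  have hr : (toeplitz n p + (toeplitz n p)ᵀ) l l = 2 := by
    simpa using toeplitz_add_transpose_apply_last p l l rfl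
  rw [hD, hM, sub_sub_cancel]
  refine ⟨rank_vecMulVec_eq_one (by simp) (fun h => by simpa [hr] using congrFun h l),
    fun x => ?_, one_sub_vecMulVec_sq _ _ (by rw [dotProduct_single, mul_one, hr])⟩
  rw [vecMulVec_mulVec, op_smul_eq_smul]
  rfl
end

section
/- With the tt*-Toda setup and all eigenvalues of R unimodular and S + S^T nondegenerate with n_+ positive eigenvalues: if n = 2m, then n_+ = m + 1 + Σ_{j=1}^{m-1} (-1)^{ν_j - j}, where ν_j is the number of eigenvalue pairs e^{±iθ} of R with θ in (0, jπ/m) (equivalently, the number of roots of p̃ greater than 2cos(jπ/m)). -/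
/-!
Since `p` is palindromic of degree `2m`, `S + Sᵀ` is the circulant matrix `p(Π)` of the cyclic
shift `Π` of order `2m`: the Vandermonde vectors of the `2m`-th roots of unity `e^{ikπ/m}` are
eigenvectors, with eigenvalues `p(e^{ikπ/m})`. From `p(e^{it}) = e^{imt} ∏ᵢ (2 cos t - 2 cos θᵢ)`
the `k`-th eigenvalue is `(-1)^k ∏ᵢ 2 (cos (kπ/m) - cos θᵢ)`, of sign `(-1)^(k + ν_k)` because `cos`
decreases on `[0, π]`. The eigenvalues for `k` and `2m - k` agree and those for `k = 0, m` are
positive, so `n₊ = 2 + 2 #{0 < j < m | j + ν_j even}`, which is the formula.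
-/

open Polynomial Matrix Finset Real

theorem Finset.prod_eq_neg_one_pow_mul_prod_abs {ι α : Type*} [CommRing α] [LinearOrder α]
    [IsStrictOrderedRing α] (s : Finset ι) (f : ι → α) :
    ∏ i ∈ s, f i = (-1) ^ #{i ∈ s | f i < 0} * ∏ i ∈ s, |f i| := by
  have hf : ∀ i, f i = if f i < 0 then -|f i| else |f i| := fun i => by
    split_ifs with h
    · rw [abs_of_neg h, neg_neg]
    · rw [abs_of_nonneg (not_lt.mp h)]
  conv_lhs => rw [prod_congr rfl fun i _ => hf i]
  rw [prod_ite, prod_neg, mul_assoc, prod_filter_mul_prod_filter_not]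

theorem ite_pos_neg_one_pow_mul {α : Type*} [Field α] [LinearOrder α] [IsStrictOrderedRing α]
    (n : ℕ) {a : α} (ha : 0 < a) :
    (if 0 < (-1) ^ n * a then (1 : α) else 0) = (1 + (-1) ^ n) / 2 := by
  rcases neg_one_pow_eq_or α n with h | h <;> simp [h, ha, not_lt.mpr ha.le]

theorem sum_range_two_mul_eq_of_symm {M : Type*} [AddCommMonoid M] {m : ℕ} (hm : m ≠ 0)
    (F : ℕ → M) (hF : ∀ k ≤ 2 * m, F (2 * m - k) = F k) :
    ∑ k ∈ range (2 * m), F k = F 0 + F m + 2 • ∑ j ∈ Ioo 0 m, F j := by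
  have hlow : ∑ k ∈ range (m + 1), F k = F 0 + F m + ∑ j ∈ Ioo 0 m, F j := by
    rw [sum_range_succ, range_eq_Ico, sum_eq_sum_Ico_succ_bot (Nat.pos_of_ne_zero hm)]
    exact add_right_comm _ _ _
  have hhigh : ∑ k ∈ Ico (m + 1) (2 * m), F k = ∑ j ∈ Ioo 0 m, F j := by
    refine sum_nbij' (2 * m - ·) (2 * m - ·) ?_ ?_ ?_ ?_
      fun k hk => (hF k (mem_Ico.mp hk).2.le).symm
    all_goals intro k hk; simp only [mem_Ico, mem_Ioo] at hk ⊢; omega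
  rw [← sum_range_add_sum_Ico _ (by omega : m + 1 ≤ 2 * m), hlow, hhigh, two_nsmul, add_assoc]

theorem Fintype.card_subtype_comp_eq_of_map_eq {ι κ α : Type*} [Fintype ι] [Fintype κ]
    {f : ι → α} {g : κ → α} (h : univ.val.map f = univ.val.map g) (p : α → Prop)
    [DecidablePred p] : Fintype.card {i // p (f i)} = Fintype.card {k // p (g k)} := by
  simp only [Fintype.card_subtype, card_def, filter_val, ← Multiset.countP_map, h]

theorem Matrix.charpoly_eq_prod_of_mulVec_col {K n : Type*} [Field K] [Fintype n] [DecidableEq n]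
    (M W : Matrix n n K) (d : n → K) (hW : IsUnit W.det)
    (h : ∀ k, M *ᵥ (fun i => W i k) = d k • fun i => W i k) :
    M.charpoly = ∏ k, (X - C (d k)) := by
  have hMW : M * W = W * diagonal d := by
    ext i k
    rw [mul_diagonal]
    simpa [mul_apply, mulVec, dotProduct, mul_comm] using congrFun (h k) i
  have hM : M = W * diagonal d * W⁻¹ := by rw [← hMW, mul_nonsing_inv_cancel_right _ _ hW]
  rw [hM, charpoly_mul_comm, nonsing_inv_mul_cancel_left _ _ hW, charpoly_diagonal]

theorem Matrix.IsHermitian.map_eigenvalues_eq {n : Type*} [Fintype n] [DecidableEq n]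
    {A : Matrix n n ℝ} (hA : A.IsHermitian) (d : n → ℝ)
    (h : A.charpoly = ∏ k, (X - C (d k))) :
    univ.val.map hA.eigenvalues = univ.val.map d := by
  have := congrArg roots h
  rw [hA.roots_charpoly_eq_eigenvalues,
    roots_prod _ _ (prod_ne_zero_iff.mpr fun k _ => X_sub_C_ne_zero _)] at this
  simpa using this

def upperToeplitz {R : Type*} [Semiring R] (p : R[X]) (n : ℕ) : Matrix (Fin n) (Fin n) R :=
  Matrix.of fun i j => if (i : ℕ) ≤ j then p.coeff (j - i) else 0

theorem upperToeplitz_map {R S : Type*} [Semiring R] [Semiring S] (f : R →+* S) (p : R[X]) (n : ℕ) :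
    (upperToeplitz p n).map f = upperToeplitz (p.map f) n := by
  ext i j
  simp [upperToeplitz, apply_ite f]

section Toeplitz

variable {R : Type*} [CommRing R] {N : ℕ}

theorem sum_range_ite_le_mul_pow {i : ℕ} (c : ℕ → R) (z : R) (hi : i ≤ N) :
    ∑ j ∈ range N, (if i ≤ j then c (j - i) else 0) * z ^ j =
      ∑ d ∈ range (N - i), c d * z ^ (i + d) := by
  rw [← sum_range_add_sum_Ico _ hi, sum_Ico_eq_sum_range]
  simp +contextual [Finset.sum_eq_zero, Nat.not_le.mpr]

theorem sum_range_ite_ge_mul_pow {i : ℕ} (c : ℕ → R) (hc : ∀ d ≤ N, c (N - d) = c d) {z : R}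
    (hz : z ^ N = 1) (hi : i < N) :
    ∑ j ∈ range N, (if j ≤ i then c (i - j) else 0) * z ^ j =
      ∑ d ∈ Ico (N - i) (N + 1), c d * z ^ (i + d) := by
  rw [← sum_range_add_sum_Ico _ (Nat.succ_le_of_lt hi), sum_Ico_eq_sum_range, sum_Ico_eq_sum_range,
    show N + 1 - (N - i) = i + 1 by omega]
  have hnot_le : ∀ k, ¬ i.succ + k ≤ i := fun k => by omega
  simp only [hnot_le, if_false, zero_mul, sum_const_zero, add_zero]
  refine sum_congr rfl fun k hk => ?_
  have hk : k ≤ i := Nat.lt_succ_iff.mp (mem_range.mp hk)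
  rw [if_pos hk, ← hc (i - k) (by omega), show i + (N - i + k) = N + k by omega, pow_add, hz,
    one_mul, show N - (i - k) = N - i + k by omega]

theorem upperToeplitz_add_transpose_mulVec_pow (p : R[X]) (hdeg : p.natDegree ≤ N)
    (hpal : p.reflect N = p) {z : R} (hz : z ^ N = 1) :
    (upperToeplitz p N + (upperToeplitz p N)ᵀ) *ᵥ (fun j : Fin N => z ^ (j : ℕ)) =
      p.eval z • fun j : Fin N => z ^ (j : ℕ) := by
  have hc : ∀ d ≤ N, p.coeff (N - d) = p.coeff d := fun d hd => by
    conv_rhs => rw [← hpal]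
    rw [coeff_reflect, revAt_le hd]
  funext i
  have hi : (i : ℕ) < N := i.isLt
  simp only [mulVec, dotProduct, Matrix.add_apply, transpose_apply, upperToeplitz, of_apply,
    Pi.smul_apply, smul_eq_mul, add_mul]
  rw [Fin.sum_univ_eq_sum_range (fun j => (if (i : ℕ) ≤ j then p.coeff (j - i) else 0) * z ^ j +
      (if j ≤ (i : ℕ) then p.coeff (i - j) else 0) * z ^ j), sum_add_distrib,
    sum_range_ite_le_mul_pow _ _ hi.le, sum_range_ite_ge_mul_pow _ hc hz hi,
    sum_range_add_sum_Ico _ ((Nat.sub_le N i).trans N.le_succ),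
    eval_eq_sum_range' (Nat.lt_succ_of_le hdeg), sum_mul]
  exact sum_congr rfl fun d _ => by ring

theorem charpoly_upperToeplitz_add_transpose {K : Type*} [Field K] (p : K[X])
    (hdeg : p.natDegree ≤ N) (hpal : p.reflect N = p) {ζ : K} (hζ : IsPrimitiveRoot ζ N) :
    (upperToeplitz p N + (upperToeplitz p N)ᵀ).charpoly =
      ∏ k : Fin N, (X - C (p.eval (ζ ^ (k : ℕ)))) := by
  refine charpoly_eq_prod_of_mulVec_col _ (vandermonde fun k : Fin N => ζ ^ (k : ℕ))ᵀ _ ?_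
    fun k => upperToeplitz_add_transpose_mulVec_pow p hdeg hpal ?_
  · rw [det_transpose, isUnit_iff_ne_zero, det_vandermonde_ne_zero_iff]
    exact fun i j h => Fin.ext (hζ.pow_inj i.isLt j.isLt h)
  · rw [← pow_mul, mul_comm, pow_mul, hζ.pow_eq_one, one_pow]

end Toeplitz

theorem Polynomial.natDegree_prod_quadratic_le {R ι : Type*} [CommRing R] (s : Finset ι)
    (c : ι → R) :
    (∏ i ∈ s, (X ^ 2 - C (c i) * X + 1)).natDegree ≤ 2 * #s := by
  refine (natDegree_prod_le _ _).trans ?_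
  rw [mul_comm, ← smul_eq_mul, ← sum_const]
  exact sum_le_sum fun i _ => by compute_degree

theorem Polynomial.reflect_prod_quadratic {R ι : Type*} [CommRing R] (s : Finset ι) (c : ι → R) :
    (∏ i ∈ s, (X ^ 2 - C (c i) * X + 1)).reflect (2 * #s) =
      ∏ i ∈ s, (X ^ 2 - C (c i) * X + 1) := by
  classical
  induction s using Finset.induction_on with
  | empty => simp
  | insert a s ha ih =>
    have hq : (X ^ 2 - C (c a) * X + 1 : R[X]).reflect 2 = X ^ 2 - C (c a) * X + 1 := by
      have hX : (X : R[X]).reflect 2 = X := by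
        simpa [revAt_le] using reflect_monomial (R := R) 2 1
      simp only [reflect_add, reflect_sub, reflect_C_mul, reflect_monomial, reflect_one, hX,
        revAt_le le_rfl, Nat.sub_self, pow_zero]
      ring
    rw [prod_insert ha, card_insert_of_notMem ha, mul_add, mul_one, add_comm,
      reflect_mul _ _ (by compute_degree) (natDegree_prod_quadratic_le s c), hq, ih]

noncomputable def toeplitzEigenvalue {m : ℕ} (θ : Fin m → ℝ) (k : ℕ) : ℝ :=
  (-1) ^ k * ∏ i, 2 * (cos (k * π / m) - cos (θ i))

theorem aeval_exp_mul_I_quadratic (t θ : ℝ) :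
    aeval (Complex.exp (t * Complex.I)) (X ^ 2 - C (2 * cos θ) * X + 1 : ℝ[X]) =
      Complex.exp (t * Complex.I) * (2 * (cos t - cos θ) : ℝ) := by
  have hinv : Complex.exp (t * Complex.I) * Complex.exp (-t * Complex.I) = 1 := by
    rw [← Complex.exp_add, neg_mul, add_neg_cancel, Complex.exp_zero]
  have hcos := Complex.two_cos t
  simp only [map_add, map_sub, map_pow, map_mul, aeval_X, aeval_C, map_one, Complex.coe_algebraMap]
  push_cast
  linear_combination (-Complex.exp (t * Complex.I)) * hcos - hinv

theorem aeval_rootOfUnity_prod_quadratic {m : ℕ} (hm : m ≠ 0) (θ : Fin m → ℝ) (k : ℕ) :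
    aeval (Complex.exp (2 * π * Complex.I / (2 * m : ℕ)) ^ k)
        (∏ i, (X ^ 2 - C (2 * cos (θ i)) * X + 1 : ℝ[X])) = toeplitzEigenvalue θ k := by
  have hω : Complex.exp (2 * π * Complex.I / (2 * m : ℕ)) ^ k =
      Complex.exp ((k * π / m : ℝ) * Complex.I) := by
    rw [← Complex.exp_nat_mul]
    congr 1
    push_cast
    field_simp
  have hωm : Complex.exp ((k * π / m : ℝ) * Complex.I) ^ m = (-1) ^ k := by
    rw [← Complex.exp_nat_mul, ← Complex.exp_pi_mul_I, ← Complex.exp_nat_mul]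
    congr 1
    push_cast
    field_simp
  rw [hω, map_prod, prod_congr rfl fun i _ => aeval_exp_mul_I_quadratic _ (θ i), prod_mul_distrib,
    prod_const, card_univ, Fintype.card_fin, hωm, toeplitzEigenvalue]
  push_cast
  rfl

theorem toeplitzEigenvalue_two_mul_sub {m : ℕ} (θ : Fin m → ℝ) {k : ℕ} (hk : k ≤ 2 * m) :
    toeplitzEigenvalue θ (2 * m - k) = toeplitzEigenvalue θ k := by
  obtain rfl | hm := eq_or_ne m 0
  · obtain rfl : k = 0 := by omega
    rfl
  have hcos : cos ((2 * m - k : ℕ) * π / m) = cos (k * π / m) := by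
    rw [Nat.cast_sub hk, ← cos_two_pi_sub]
    congr 1
    field_simp
    push_cast
    ring
  have hsign : (-1 : ℝ) ^ (2 * m - k) = (-1) ^ k := by
    rw [neg_one_pow_eq_pow_mod_two, neg_one_pow_eq_pow_mod_two (n := k)]
    congr 1
    omega
  simp only [toeplitzEigenvalue, hcos, hsign]

theorem ite_pos_toeplitzEigenvalue {m : ℕ} (θ : Fin m → ℝ) (hθ : ∀ i, θ i ∈ Set.Icc 0 π) {k : ℕ}
    (hk : k ≤ m) (hgen : ∀ i, θ i ≠ k * π / m) :
    (if 0 < toeplitzEigenvalue θ k then (1 : ℝ) else 0) =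
      (1 + (-1) ^ (k + Fintype.card {i // θ i < k * π / m})) / 2 := by
  unfold toeplitzEigenvalue
  set t : ℝ := k * π / m
  have ht : t ∈ Set.Icc 0 π := by
    obtain rfl | hm := eq_or_ne m 0
    · simp [t, pi_nonneg]
    refine ⟨by positivity, div_le_of_le_mul₀ (by positivity) pi_nonneg ?_⟩
    rw [mul_comm]
    gcongr
  have hneg : ∀ i, 2 * (cos t - cos (θ i)) < 0 ↔ θ i < t := fun i => by
    rw [← strictAntiOn_cos.lt_iff_gt ht (hθ i)]
    constructor <;> intro h <;> linarith
  have hne : ∀ i, 2 * (cos t - cos (θ i)) ≠ 0 := fun i h =>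
    hgen i (injOn_cos (hθ i) ht (by linarith))
  rw [prod_eq_neg_one_pow_mul_prod_abs, filter_congr fun i _ => hneg i,
    ← mul_assoc, ← pow_add, Fintype.card_subtype]
  exact ite_pos_neg_one_pow_mul _ (prod_pos fun i _ => abs_pos.mpr (hne i))

theorem card_pos_toeplitzEigenvalue {m : ℕ} (hm : m ≠ 0) (θ : Fin m → ℝ)
    (hθ : ∀ i, 0 < θ i ∧ θ i < π) (hgen : ∀ i (j : ℕ), θ i ≠ j * π / m) :
    (Fintype.card {k : Fin (2 * m) // 0 < toeplitzEigenvalue θ k} : ℝ) =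
      m + 1 + ∑ j ∈ Ioo 0 m, (-1 : ℝ) ^ ((Fintype.card {i // θ i < j * π / m} : ℤ) - j) := by
  set ν : ℕ → ℕ := fun j => Fintype.card {i // θ i < j * π / m}
  have hind : ∀ k ≤ m,
      (if 0 < toeplitzEigenvalue θ k then (1 : ℝ) else 0) = (1 + (-1) ^ (k + ν k)) / 2 :=
    fun k hk => ite_pos_toeplitzEigenvalue θ (fun i => ⟨(hθ i).1.le, (hθ i).2.le⟩) hk (hgen · k)
  have hν0 : ν 0 = 0 := Fintype.card_eq_zero_iff.mpr ⟨fun i => by simpa using (hθ i.1).1.trans i.2⟩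
  have hνm : ν m = m := by
    have hmπ : (m : ℝ) * π / m = π := by field_simp
    simp only [ν, hmπ, (hθ _).2, Fintype.card_subtype_true, Fintype.card_fin]
  rw [Fintype.card_subtype, natCast_card_filter,
    Fin.sum_univ_eq_sum_range (fun k => if 0 < toeplitzEigenvalue θ k then (1 : ℝ) else 0),
    sum_range_two_mul_eq_of_symm hm _ fun k hk => by rw [toeplitzEigenvalue_two_mul_sub θ hk],
    hind 0 (Nat.zero_le _), hind m le_rfl, hν0, hνm,
    sum_congr rfl fun j hj => hind j (mem_Ioo.mp hj).2.le]
  have hsign : ∀ a b : ℕ, (-1 : ℝ) ^ ((a : ℤ) - b) = (-1) ^ (b + a) := fun a b => by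
    rw [zpow_sub₀ (by norm_num), zpow_natCast, zpow_natCast, pow_add]
    rcases neg_one_pow_eq_or ℝ b with h | h <;> rw [h] <;> ring
  have hcard : (#(Ioo 0 m) : ℝ) = m - 1 := by
    rw [Nat.card_Ioo, Nat.sub_zero, Nat.cast_pred (Nat.pos_of_ne_zero hm)]
  simp only [ν, hsign, ← two_mul m, pow_mul, neg_one_sq, one_pow, nsmul_eq_mul, Nat.cast_ofNat,
    mul_sum, mul_div_cancel₀ _ (two_ne_zero' ℝ), sum_add_distrib, sum_const, hcard]
  ring

theorem card_pos_eigenvalues_eq {m : ℕ} (hm : m ≠ 0) (θ : Fin m → ℝ)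
    {S : Matrix (Fin (2 * m)) (Fin (2 * m)) ℝ}
    (hS : S = upperToeplitz (∏ i, (X ^ 2 - C (2 * cos (θ i)) * X + 1)) (2 * m))
    (hH : (S + Sᵀ).IsHermitian) :
    Fintype.card {k // 0 < hH.eigenvalues k} =
      Fintype.card {k : Fin (2 * m) // 0 < toeplitzEigenvalue θ k} := by
  set P : ℝ[X] := ∏ i, (X ^ 2 - C (2 * cos (θ i)) * X + 1)
  have hdeg : P.natDegree ≤ 2 * m := by
    simpa only [card_univ, Fintype.card_fin] using
      natDegree_prod_quadratic_le univ fun i => 2 * cos (θ i)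
  have hpal : P.reflect (2 * m) = P := by
    simpa only [card_univ, Fintype.card_fin] using
      reflect_prod_quadratic univ fun i => 2 * cos (θ i)
  have hchar : (S + Sᵀ).charpoly = ∏ k : Fin (2 * m), (X - C (toeplitzEigenvalue θ k)) := by
    apply map_injective _ (algebraMap ℝ ℂ).injective
    rw [← charpoly_map, hS, Matrix.map_add _ (map_add _), transpose_map, upperToeplitz_map,
      charpoly_upperToeplitz_add_transpose _ (natDegree_map_le.trans hdeg)
        (by rw [reflect_map, hpal]) (Complex.isPrimitiveRoot_exp (2 * m) (by omega))]
    conv_rhs => rw [Polynomial.map_prod]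
    refine prod_congr rfl fun k _ => ?_
    rw [eval_map_algebraMap, aeval_rootOfUnity_prod_quadratic hm, Polynomial.map_sub, map_X, map_C]
    rfl
  exact Fintype.card_subtype_comp_eq_of_map_eq (hH.map_eigenvalues_eq _ hchar) _

theorem stmt17_general (m : ℕ) (hm : 1 ≤ m) (θ : Fin m → ℝ)
    (hθ : ∀ i, 0 < θ i ∧ θ i < Real.pi)
    (hgen : ∀ i (j : ℕ), θ i ≠ j * Real.pi / m)
    (P : Polynomial ℝ)
    (hP : P = ∏ i : Fin m,
      (Polynomial.X ^ 2 - Polynomial.C (2 * Real.cos (θ i)) * Polynomial.X + 1))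
    (S : Matrix (Fin (2 * m)) (Fin (2 * m)) ℝ)
    (hS : ∀ i j : Fin (2 * m), S i j =
      if (i : ℕ) ≤ (j : ℕ) then P.coeff ((j : ℕ) - (i : ℕ)) else 0)
    (hH : (S + Sᵀ).IsHermitian)
    (ν : ℕ → ℕ)
    (hν : ∀ j : ℕ, ν j = Fintype.card {i : Fin m // θ i < j * Real.pi / m}) :
    ((Fintype.card {k : Fin (2 * m) // 0 < hH.eigenvalues k} : ℝ)) =
      m + 1 + ∑ j ∈ Finset.Ioo 0 m, (-1 : ℝ) ^ (((ν j : ℤ)) - (j : ℤ)) := by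
  have hm0 : m ≠ 0 := Nat.one_le_iff_ne_zero.mp hm
  have hS' : S = upperToeplitz P (2 * m) := by ext i j; rw [hS]; rfl
  subst hP
  simp only [card_pos_eigenvalues_eq hm0 θ hS' hH, card_pos_toeplitzEigenvalue hm0 θ hθ hgen, hν]

theorem stmt17 (m : ℕ) (hm : 1 ≤ m) (θ : Fin m → ℝ)
    (hθ : ∀ i, 0 < θ i ∧ θ i < Real.pi)
    (hgen : ∀ i (j : ℕ), θ i ≠ j * Real.pi / m)
    (P : Polynomial ℝ)
    (hP : P = ∏ i : Fin m,
      (Polynomial.X ^ 2 - Polynomial.C (2 * Real.cos (θ i)) * Polynomial.X + 1))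
    (S : Matrix (Fin (2 * m)) (Fin (2 * m)) ℝ)
    (hS : ∀ i j : Fin (2 * m), S i j =
      if (i : ℕ) ≤ (j : ℕ) then P.coeff ((j : ℕ) - (i : ℕ)) else 0)
    (hH : (S + Sᵀ).IsHermitian)
    (hnd : (S + Sᵀ).det ≠ 0)
    (ν : ℕ → ℕ)
    (hν : ∀ j : ℕ, ν j = Fintype.card {i : Fin m // θ i < j * Real.pi / m}) :
    ((Fintype.card {k : Fin (2 * m) // 0 < hH.eigenvalues k} : ℝ)) =
      m + 1 + ∑ j ∈ Finset.Ioo 0 m, (-1 : ℝ) ^ (((ν j : ℤ)) - (j : ℤ)) :=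
  stmt17_general m hm θ hθ hgen P hP S hS hH ν hν
end
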